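/- arXiv:2604.10727 — 7 statements merged into one kernel-verified Lean document; each statement's English description precedes it below -/
import Mathlib

section
/- For all θ ≥ 1 and constants c ≥ exp(θ−1), the function x ↦ (log(x+c))^θ is concave on [0,∞). -/
open Real Set

/-! With `L = log y`, the second derivative of `L ^ θ` is `θ L ^ (θ - 2) (θ - 1 - L) / y ^ 2`,
which is nonpositive as soon as `L ≥ θ - 1`, i.e. `y ≥ exp (θ - 1)`. Shifting by `c` moves
`[0, ∞)` into this region. -/

section LogRpow

variable {θ y : ℝ}

lemma hasDerivAt_log_rpow (hy : 1 < y) :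
    HasDerivAt (fun y => log y ^ θ) (θ * log y ^ (θ - 1) / y) y := by
  convert (hasDerivAt_log (by positivity : y ≠ 0)).rpow_const (p := θ)
    (Or.inl (log_pos hy).ne') using 1
  field_simp

lemma hasDerivAt_deriv_log_rpow (hy : 1 < y) :
    HasDerivAt (fun y => θ * log y ^ (θ - 1) / y)
      (θ * log y ^ (θ - 2) * (θ - 1 - log y) / y ^ 2) y := by
  have hL := log_pos hy
  have hpow : HasDerivAt (fun y => log y ^ (θ - 1))
      (y⁻¹ * (θ - 1) * log y ^ (θ - 1 - 1)) y :=
    (hasDerivAt_log (by positivity : y ≠ 0)).rpow_const (Or.inl hL.ne')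
  refine ((hpow.const_mul θ).div (hasDerivAt_id y) (by positivity : y ≠ 0)).congr_deriv ?_
  have hsplit : log y ^ (θ - 1) = log y ^ (θ - 2) * log y := by
    rw [← rpow_add_one hL.ne']; ring_nf
  rw [hsplit, show θ - 1 - 1 = θ - 2 by ring, id]
  field_simp

lemma log_rpow_deriv2_nonpos (hθ : 0 ≤ θ) (hy : 1 < y) (hL : θ - 1 ≤ log y) :
    θ * log y ^ (θ - 2) * (θ - 1 - log y) / y ^ 2 ≤ 0 := by
  have hpow : 0 ≤ log y ^ (θ - 2) := (rpow_pos_of_pos (log_pos hy) _).le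
  exact div_nonpos_of_nonpos_of_nonneg
    (mul_nonpos_of_nonneg_of_nonpos (mul_nonneg hθ hpow) (by linarith)) (sq_nonneg y)

theorem concaveOn_log_rpow (hθ : 1 ≤ θ) :
    ConcaveOn ℝ (Ici (exp (θ - 1))) (fun y => log y ^ θ) := by
  have hone : 1 ≤ exp (θ - 1) := one_le_exp (by linarith)
  have hgt : ∀ y ∈ interior (Ici (exp (θ - 1))), 1 < y := fun y hy => by
    rw [interior_Ici] at hy
    exact hone.trans_lt hy
  refine concaveOn_of_hasDerivWithinAt2_nonpos (convex_Ici _) ?_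
    (fun y hy => (hasDerivAt_log_rpow (hgt y hy)).hasDerivWithinAt)
    (fun y hy => (hasDerivAt_deriv_log_rpow (hgt y hy)).hasDerivWithinAt)
    (fun y hy => log_rpow_deriv2_nonpos (by linarith) (hgt y hy) ?_)
  · refine (continuousOn_log.mono fun y hy => ?_).rpow_const fun _ _ => Or.inr (by linarith)
    exact (zero_lt_one.trans_le (hone.trans hy)).ne'
  · have hy0 : 0 < y := zero_lt_one.trans (hgt y hy)
    rw [interior_Ici] at hy
    exact (le_log_iff_exp_le hy0).2 hy.le

end LogRpow

/-- For `θ ≥ 1` and `c ≥ exp(θ-1)`, the function `x ↦ (log(x+c))^θ`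
is concave on `[0, ∞)`. -/
theorem stmt4 (θ c : ℝ) (hθ : 1 ≤ θ) (hc : Real.exp (θ - 1) ≤ c) :
    ConcaveOn ℝ (Set.Ici (0:ℝ)) (fun x : ℝ => (Real.log (x + c)) ^ θ) :=
  ((concaveOn_log_rpow hθ).translate_left c).subset
    (fun x (hx : 0 ≤ x) => show exp (θ - 1) ≤ c + x by linarith) (convex_Ici 0)
end

section
/- Let θ ≥ 1, A = 1, and let P ≪ Q be probability measures on a measurable space with D_2(P‖Q) < ∞, where D_2 denotes the Rényi divergence of order 2. Then the f-divergence with f(x)=x(log(x+1))^{1/θ} satisfies D_f(P‖Q) ≤ (D_α(P‖Q) + log 2)^{1/θ} for any α ≥ 2, where D_α is the Rényi divergence of order α. -/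
open Real MeasureTheory

/-!
Write `t = dP/dQ`, so that `D_f(P‖Q) = E_P[log (t + 1) ^ (1/θ)]`. Jensen's inequality for the
concave power `y ↦ y ^ (1/θ)` bounds this by `(E_P[log (t + 1)]) ^ (1/θ)`, and Jensen for `log`
gives `E_P[log (t + 1)] ≤ log (E_P[t] + 1) ≤ log 2 + log E_P[t]`, because `E_P[t] = E_Q[t²] ≥ 1`.
Finally `log E_P[t] = D_2(P‖Q) ≤ D_α(P‖Q)`, which is Jensen for the convex power
`y ↦ y ^ (α - 1)` under `P`.
-/

lemma rpow_le_one_add {y p : ℝ} (hy : 0 ≤ y) (hp₀ : 0 ≤ p) (hp₁ : p ≤ 1) : y ^ p ≤ 1 + y := by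
  rcases le_total y 1 with h | h
  · linarith [rpow_le_one hy h hp₀]
  · have := rpow_le_rpow_of_exponent_le h hp₁
    rw [rpow_one] at this
    linarith

lemma rpow_eq_mul_rpow_sub_one {x a : ℝ} (hx : 0 ≤ x) (ha : a ≠ 0) : x ^ a = x * x ^ (a - 1) := by
  conv_lhs => rw [← add_sub_cancel 1 a, rpow_add' hx (by simpa using ha), rpow_one]

section Jensen

variable {Ω : Type*} [MeasurableSpace Ω] {μ : Measure Ω} [IsProbabilityMeasure μ] {f : Ω → ℝ}

lemma integral_rpow_le_rpow_integral {p : ℝ} (hp₀ : 0 ≤ p) (hp₁ : p ≤ 1) (hf : 0 ≤ᵐ[μ] f)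
    (hfi : Integrable f μ) (hfp : Integrable (fun x ↦ f x ^ p) μ) :
    ∫ x, f x ^ p ∂μ ≤ (∫ x, f x ∂μ) ^ p :=
  (Real.concaveOn_rpow hp₀ hp₁).le_map_integral (continuous_rpow_const hp₀).continuousOn
    isClosed_Ici hf hfi hfp

lemma rpow_integral_le_integral_rpow {q : ℝ} (hq : 1 ≤ q) (hf : 0 ≤ᵐ[μ] f)
    (hfi : Integrable f μ) (hfq : Integrable (fun x ↦ f x ^ q) μ) :
    (∫ x, f x ∂μ) ^ q ≤ ∫ x, f x ^ q ∂μ :=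
  (convexOn_rpow hq).map_integral_le (continuous_rpow_const (by linarith)).continuousOn
    isClosed_Ici hf hfi hfq

lemma integral_log_le_log_integral (hf : ∀ᵐ x ∂μ, 0 < f x) (hfi : Integrable f μ)
    (hlog : Integrable (fun x ↦ log (f x)) μ) :
    ∫ x, log (f x) ∂μ ≤ log (∫ x, f x ∂μ) := by
  set c := ∫ x, f x ∂μ
  have hc : 0 < c := by
    rw [integral_pos_iff_support_of_nonneg_ae (hf.mono fun x hx ↦ hx.le) hfi]
    refine pos_iff_ne_zero.2 fun h ↦ ?_
    obtain ⟨x, hx₀, hx⟩ := ((measure_eq_zero_iff_ae_notMem.1 h).and hf).exists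
    exact hx₀ hx.ne'
  -- Jensen's inequality in Mathlib needs a closed domain, which `Ioi 0` is not, so we integrate
  -- the tangent line of `log` at the mean `c` instead.
  have tangent : ∀ᵐ x ∂μ, log (f x) ≤ f x / c + (log c - 1) := by
    filter_upwards [hf] with x hx
    have := log_le_sub_one_of_pos (div_pos hx hc)
    rw [log_div hx.ne' hc.ne'] at this
    linarith
  calc ∫ x, log (f x) ∂μ ≤ ∫ x, (f x / c + (log c - 1)) ∂μ :=
        integral_mono_ae hlog ((hfi.div_const c).add (integrable_const _)) tangent
    _ = log c := by
        rw [integral_add (hfi.div_const c) (integrable_const _), integral_div, div_self hc.ne']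
        simp

lemma log_integral_le_inv_mul_log_integral_rpow {q : ℝ} (hq : 1 ≤ q) (hf : 0 ≤ᵐ[μ] f)
    (hfi : Integrable f μ) (hfq : Integrable (fun x ↦ f x ^ q) μ) (hpos : 0 < ∫ x, f x ∂μ) :
    log (∫ x, f x ∂μ) ≤ q⁻¹ * log (∫ x, f x ^ q ∂μ) := by
  have hq₀ : 0 < q := by linarith
  rw [le_inv_mul_iff₀ hq₀, ← log_rpow hpos]
  exact log_le_log (by positivity) (rpow_integral_le_integral_rpow hq hf hfi hfq)

end Jensen

section LogMoment

variable {Ω : Type*} [MeasurableSpace Ω] {μ : Measure Ω} [IsProbabilityMeasure μ] {f : Ω → ℝ}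

theorem integral_log_add_one_rpow_le {p q : ℝ} (hp₀ : 0 ≤ p) (hp₁ : p ≤ 1) (hq : 1 ≤ q)
    (hf : ∀ x, 0 ≤ f x) (hfi : Integrable f μ) (hfq : Integrable (fun x ↦ f x ^ q) μ)
    (hf₁ : 1 ≤ ∫ x, f x ∂μ) :
    ∫ x, log (f x + 1) ^ p ∂μ ≤ (q⁻¹ * log (∫ x, f x ^ q ∂μ) + log 2) ^ p := by
  have hlog₀ : ∀ x, 0 ≤ log (f x + 1) := fun x ↦ log_nonneg (by linarith [hf x])
  have hlogi : Integrable (fun x ↦ log (f x + 1)) μ := by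
    refine hfi.mono' (measurable_log.comp_aemeasurable (hfi.aemeasurable.add_const 1)
      ).aestronglyMeasurable (ae_of_all _ fun x ↦ ?_)
    rw [norm_of_nonneg (hlog₀ x)]
    linarith [log_le_sub_one_of_pos (show 0 < f x + 1 by linarith [hf x])]
  have hlogpi : Integrable (fun x ↦ log (f x + 1) ^ p) μ := by
    refine ((integrable_const 1).add hlogi).mono'
      (hlogi.aestronglyMeasurable.aemeasurable.pow_const p).aestronglyMeasurable
      (ae_of_all _ fun x ↦ ?_)
    rw [norm_of_nonneg (rpow_nonneg (hlog₀ x) p)]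
    exact rpow_le_one_add (hlog₀ x) hp₀ hp₁
  have hlog_le : ∫ x, log (f x + 1) ∂μ ≤ log 2 + log (∫ x, f x ∂μ) :=
    calc ∫ x, log (f x + 1) ∂μ ≤ log (∫ x, (f x + 1) ∂μ) :=
          integral_log_le_log_integral (ae_of_all _ fun x ↦ by linarith [hf x])
            (hfi.add (integrable_const 1)) hlogi
      _ = log (∫ x, f x ∂μ + 1) := by rw [integral_add hfi (integrable_const 1)]; simp
      _ ≤ log (2 * ∫ x, f x ∂μ) := log_le_log (by linarith) (by linarith)
      _ = log 2 + log (∫ x, f x ∂μ) := log_mul two_ne_zero (by linarith)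
  have hRenyi := log_integral_le_inv_mul_log_integral_rpow hq (ae_of_all _ hf) hfi hfq
    (by linarith)
  calc ∫ x, log (f x + 1) ^ p ∂μ ≤ (∫ x, log (f x + 1) ∂μ) ^ p :=
        integral_rpow_le_rpow_integral hp₀ hp₁ (ae_of_all _ hlog₀) hlogi hlogpi
    _ ≤ (q⁻¹ * log (∫ x, f x ^ q ∂μ) + log 2) ^ p :=
        rpow_le_rpow (integral_nonneg hlog₀) (by linarith) hp₀

end LogMoment

section RadonNikodym

variable {Ω : Type*} [MeasurableSpace Ω] {μ ν : Measure Ω} [SigmaFinite μ] [SigmaFinite ν]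

lemma integrable_toReal_rnDeriv_rpow_iff (hμν : μ ≪ ν) {a : ℝ} (ha : a ≠ 0) :
    Integrable (fun x ↦ (μ.rnDeriv ν x).toReal ^ a) ν ↔
      Integrable (fun x ↦ (μ.rnDeriv ν x).toReal ^ (a - 1)) μ := by
  simp_rw [rpow_eq_mul_rpow_sub_one ENNReal.toReal_nonneg ha]
  exact integrable_toReal_rnDeriv_mul_iff hμν

lemma integral_toReal_rnDeriv_rpow (hμν : μ ≪ ν) {a : ℝ} (ha : a ≠ 0) :
    ∫ x, (μ.rnDeriv ν x).toReal ^ a ∂ν = ∫ x, (μ.rnDeriv ν x).toReal ^ (a - 1) ∂μ := by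
  simp_rw [rpow_eq_mul_rpow_sub_one ENNReal.toReal_nonneg ha]
  exact integral_toReal_rnDeriv_mul hμν

lemma one_le_integral_toReal_rnDeriv [IsProbabilityMeasure μ] [IsProbabilityMeasure ν]
    (hμν : μ ≪ ν) (h₂ : Integrable (fun x ↦ (μ.rnDeriv ν x).toReal ^ (2 : ℝ)) ν) :
    1 ≤ ∫ x, (μ.rnDeriv ν x).toReal ∂μ :=
  calc 1 = (∫ x, (μ.rnDeriv ν x).toReal ∂ν) ^ (2 : ℝ) := by
        simp [Measure.integral_toReal_rnDeriv hμν]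
    _ ≤ ∫ x, (μ.rnDeriv ν x).toReal ^ (2 : ℝ) ∂ν :=
        rpow_integral_le_integral_rpow one_le_two (ae_of_all _ fun _ ↦ ENNReal.toReal_nonneg)
          Measure.integrable_toReal_rnDeriv h₂
    _ = ∫ x, (μ.rnDeriv ν x).toReal ∂μ := by
        rw [integral_toReal_rnDeriv_rpow hμν two_ne_zero]; norm_num

end RadonNikodym

/-- For `θ ≥ 1`, `A = 1`, probability measures `P ≪ Q` with finite
Rényi-2 divergence, and any `α ≥ 2` (with finite Rényi-α divergence, expressed
through integrability of `(dP/dQ)^α`), the shifted-log `f`-divergence with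
`f(x) = x (log(x+1))^(1/θ)` satisfies `D_f(P‖Q) ≤ (D_α(P‖Q) + log 2)^(1/θ)`,
where `D_α(P‖Q) = (α-1)⁻¹ log ∫ (dP/dQ)^α dQ`. -/
theorem stmt6 {Ω : Type*} [MeasurableSpace Ω] (P Q : Measure Ω)
    [IsProbabilityMeasure P] [IsProbabilityMeasure Q]
    (hPQ : P ≪ Q) (θ α : ℝ) (hθ : 1 ≤ θ) (hα : 2 ≤ α)
    (hD2 : Integrable (fun x => ((P.rnDeriv Q x).toReal) ^ (2:ℝ)) Q)
    (hDα : Integrable (fun x => ((P.rnDeriv Q x).toReal) ^ α) Q) :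
    ∫ x, (P.rnDeriv Q x).toReal * (Real.log ((P.rnDeriv Q x).toReal + 1)) ^ (1/θ) ∂Q
      ≤ ((α - 1)⁻¹ * Real.log (∫ x, ((P.rnDeriv Q x).toReal) ^ α ∂Q)
          + Real.log 2) ^ (1/θ) := by
  have hα₀ : α ≠ 0 := by linarith
  have h₁ : Integrable (fun x ↦ (P.rnDeriv Q x).toReal) P := by
    simpa [show (2 : ℝ) - 1 = 1 by norm_num] using (integrable_toReal_rnDeriv_rpow_iff hPQ two_ne_zero).1 hD2
  rw [integral_toReal_rnDeriv_mul hPQ, integral_toReal_rnDeriv_rpow hPQ hα₀]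
  exact integral_log_add_one_rpow_le (by positivity) (div_le_one_of_le₀ hθ (by linarith))
    (by linarith) (fun _ ↦ ENNReal.toReal_nonneg) h₁
    ((integrable_toReal_rnDeriv_rpow_iff hPQ hα₀).1 hDα) (one_le_integral_toReal_rnDeriv hPQ hD2)
end

section
/- Fix θ > 0 and let A ≥ max(1, 2^{⌈2/θ⌉−2}·(⌈2/θ⌉)!). Then for all x ≥ 0 and y ≥ 0, x·y ≤ 2^{1/θ}·x·(log(x+A))^{1/θ} + exp(y^θ). -/
open Real

/-- Young-type inequality: for `θ > 0` and
`A ≥ max(1, 2^{⌈2/θ⌉-2} ⌈2/θ⌉!)`, all `x, y ≥ 0` satisfy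
`x y ≤ 2^{1/θ} x (log(x+A))^{1/θ} + exp(y^θ)`. -/
theorem stmt9 (θ A : ℝ) (hθ : 0 < θ)
    (hA : max 1 ((2:ℝ) ^ ((⌈2/θ⌉₊ : ℝ) - 2) * (Nat.factorial ⌈2/θ⌉₊ : ℝ)) ≤ A) :
    ∀ x y : ℝ, 0 ≤ x → 0 ≤ y →
      x * y ≤ (2:ℝ) ^ (1/θ) * x * (Real.log (x + A)) ^ (1/θ) + Real.exp (y ^ θ) := by
  intro x y hx hy
  have hA1 : (1:ℝ) ≤ A := le_trans (le_max_left _ _) hA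
  set n : ℕ := ⌈2/θ⌉₊ with hn
  have hA2 : (2:ℝ) ^ ((n : ℝ) - 2) * (Nat.factorial n : ℝ) ≤ A :=
    le_trans (le_max_right _ _) hA
  set L : ℝ := Real.log (x + A) with hL
  have hxA1 : (1:ℝ) ≤ x + A := by linarith
  have hL0 : 0 ≤ L := Real.log_nonneg hxA1
  by_cases hcase : y ≤ (2:ℝ) ^ (1/θ) * L ^ (1/θ)
  · have h1 : x * y ≤ x * ((2:ℝ) ^ (1/θ) * L ^ (1/θ)) :=
      mul_le_mul_of_nonneg_left hcase hx
    have h2 : (0:ℝ) ≤ Real.exp (y ^ θ) := (Real.exp_pos _).le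
    nlinarith [h1, h2]
  · push_neg at hcase
    set E : ℝ := Real.exp (y ^ θ / 2) with hE
    have hE1 : (1:ℝ) ≤ E := Real.one_le_exp (by positivity)
    -- raise to power θ
    have hyθ : 2 * L < y ^ θ := by
      have hb : (0:ℝ) ≤ (2:ℝ) ^ (1/θ) * L ^ (1/θ) := by positivity
      have := Real.rpow_lt_rpow hb hcase hθ
      rwa [Real.mul_rpow (by positivity) (by positivity),
        ← Real.rpow_mul (by norm_num : (0:ℝ) ≤ 2),
        ← Real.rpow_mul hL0, one_div, inv_mul_cancel₀ hθ.ne',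
        Real.rpow_one, Real.rpow_one] at this
    have hxE : x + A ≤ E := by
      have : Real.exp L ≤ E := Real.exp_le_exp.2 (by linarith)
      rwa [hL, Real.exp_log (by linarith : (0:ℝ) < x + A)] at this
    have hyE : y ≤ E + A := by
      rcases le_or_gt y 1 with hy1 | hy1
      · linarith
      · -- y² ≤ 4 A E
        have hfac : (y ^ θ / 2) ^ n / (Nat.factorial n : ℝ) ≤ E :=
          Real.pow_div_factorial_le_exp (x := y ^ θ / 2) (by positivity) n
        have hθn : (2:ℝ) ≤ θ * n := by
          have h2θ : (2/θ : ℝ) ≤ n := Nat.le_ceil _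
          calc (2:ℝ) = θ * (2/θ) := by field_simp
          _ ≤ θ * n := by nlinarith
        have hpow : y ^ (2:ℝ) ≤ y ^ (θ * (n:ℝ)) :=
          Real.rpow_le_rpow_of_exponent_le hy1.le hθn
        have hy2 : y ^ (2:ℝ) = y ^ 2 := by
          rw [show ((2:ℝ)) = ((2:ℕ):ℝ) by norm_num, Real.rpow_natCast]
        have hyn : (y ^ θ) ^ n = y ^ (θ * (n:ℝ)) := by
          rw [← Real.rpow_natCast (y ^ θ) n, ← Real.rpow_mul hy]
        have hexpand : (y ^ θ / 2) ^ n = y ^ (θ * (n:ℝ)) / 2 ^ n := by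
          rw [div_pow, hyn]
        have h4 : (2:ℝ) ^ (2:ℝ) = 4 := by
          rw [show (4:ℝ) = 2 ^ (2:ℕ) by norm_num, ← Real.rpow_natCast]
          norm_num
        have h2n : (2:ℝ) ^ n = 4 * (2:ℝ) ^ ((n : ℝ) - 2) := by
          rw [Real.rpow_sub (by norm_num : (0:ℝ) < 2), Real.rpow_natCast, h4]
          field_simp
        have hfacpos : (0:ℝ) < (Nat.factorial n : ℝ) := by positivity
        have h2npos : (0:ℝ) < (2:ℝ) ^ n := by positivity
        have hr2 : (0:ℝ) < (2:ℝ) ^ ((n : ℝ) - 2) := by positivity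
        have hy2AE : y ^ 2 ≤ 4 * A * E := by
          have h1 : y ^ (θ * (n:ℝ)) / 2 ^ n ≤ E * (Nat.factorial n : ℝ) := by
            rw [← hexpand]
            calc (y ^ θ / 2) ^ n = (y ^ θ / 2) ^ n / (Nat.factorial n : ℝ) * (Nat.factorial n : ℝ) := by
                  field_simp
            _ ≤ E * (Nat.factorial n : ℝ) := by
                  apply mul_le_mul_of_nonneg_right hfac hfacpos.le
          have h2 : y ^ 2 ≤ E * (Nat.factorial n : ℝ) * 2 ^ n := by
            rw [← hy2]
            calc y ^ (2:ℝ) ≤ y ^ (θ * (n:ℝ)) := hpow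
            _ = y ^ (θ * (n:ℝ)) / 2 ^ n * 2 ^ n := by field_simp
            _ ≤ E * (Nat.factorial n : ℝ) * 2 ^ n := by
                  apply mul_le_mul_of_nonneg_right h1 h2npos.le
          calc y ^ 2 ≤ E * (Nat.factorial n : ℝ) * 2 ^ n := h2
          _ = 4 * ((2:ℝ) ^ ((n : ℝ) - 2) * (Nat.factorial n : ℝ)) * E := by rw [h2n]; ring
          _ ≤ 4 * A * E := by
                apply mul_le_mul_of_nonneg_right _ (by linarith)
                nlinarith
        nlinarith [sq_nonneg (E - A), sq_nonneg (E + A - y)]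
    have hxE' : x ≤ E - A := by linarith
    have hmul : x * y ≤ (E - A) * (E + A) :=
      mul_le_mul hxE' hyE hy (by linarith)
    have : x * y ≤ E ^ 2 := by nlinarith [sq_nonneg A]
    have hE2 : E ^ 2 = Real.exp (y ^ θ) := by
      rw [hE, ← Real.exp_nat_mul]
      congr 1
      ring
    have hrhs : (0:ℝ) ≤ (2:ℝ) ^ (1/θ) * x * L ^ (1/θ) := by positivity
    nlinarith [this, hE2, hrhs]
end

section
/- Let m ∈ ℕ and define F_m(t) = 2·∑_{k=0}^{m} t^k/k! − e^t for t ≥ 0. Then F_m(t) ≤ 0 for all t ≥ m + log 2, and F_m(t) ≤ 2 e^m for all t ∈ [0, m + log 2]; hence sup_{t ≥ 0} F_m(t) ≤ 2 e^m. -/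
/-!
Write `F_m(t) = e^t (2 P(X_t ≤ m) - 1)` with `X_t` Poisson of mean `t`. Since `P(X_t ≤ m)` decreases
in `t`, everything reduces to the Poisson median bound `q_m := P(X_{m + log 2} ≤ m) ≤ 1/2`; on
`[0, m + log 2]` one simply uses `F_m(t) ≤ e^t`.

For `m ≤ 4` the median bound is a numerical check. For `m ≥ 5`, writing `X_{c+1}` as `X_c` plus an
independent Poisson(1) variable shows `q_m ≤ q_{m+1}`; the estimate needs the four terms of the
exponential series just below the top one, which is where `m ≥ 5` comes from. On the other hand,
pairing the terms of index `m - j` and `m + 1 + j` of the exponential series and bounding the top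
term by Stirling's formula gives `q_M ≤ 1/2 + 1/√(2πM)`. Hence `q_m ≤ q_M → 1/2`.
-/

open Real Finset Filter Topology
open scoped Nat

noncomputable def expPartialSum (m : ℕ) (t : ℝ) : ℝ := ∑ k ∈ range (m + 1), t ^ k / k !

noncomputable def poissonCDF (t : ℝ) (m : ℕ) : ℝ := exp (-t) * expPartialSum m t

noncomputable def expTail (r : ℕ) : ℝ := exp 1 - expPartialSum r 1

section expPartialSum

variable (m : ℕ) {s t : ℝ}

theorem expPartialSum_succ (t : ℝ) :
    expPartialSum (m + 1) t = expPartialSum m t + t ^ (m + 1) / (m + 1)! :=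
  sum_range_succ _ _

theorem expPartialSum_nonneg (ht : 0 ≤ t) : 0 ≤ expPartialSum m t :=
  sum_nonneg fun _ _ ↦ by positivity

theorem expPartialSum_le_exp (ht : 0 ≤ t) : expPartialSum m t ≤ exp t :=
  sum_le_exp_of_nonneg ht _

theorem expPartialSum_le_expPartialSum (hs : 0 ≤ s) (hst : s ≤ t) :
    expPartialSum m s ≤ expPartialSum m t :=
  sum_le_sum fun _ _ ↦ by gcongr

theorem hasDerivAt_expPartialSum (t : ℝ) :
    HasDerivAt (expPartialSum m) (expPartialSum m t - t ^ m / m !) t := by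
  induction m with
  | zero =>
    rw [show expPartialSum 0 = fun _ ↦ 1 from funext fun _ ↦ by simp [expPartialSum]]
    simpa using hasDerivAt_const t (1 : ℝ)
  | succ m ih =>
    have h := ih.add ((hasDerivAt_pow (m + 1) t).div_const ((m + 1)! : ℝ))
    rw [show expPartialSum m + (fun t ↦ t ^ (m + 1) / ((m + 1)! : ℝ)) = expPartialSum (m + 1) from
      funext fun t ↦ (expPartialSum_succ m t).symm] at h
    refine h.congr_deriv ?_
    rw [expPartialSum_succ, Nat.factorial_succ, Nat.add_sub_cancel]
    push_cast
    field_simp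
    ring

theorem hasDerivAt_poissonCDF (t : ℝ) :
    HasDerivAt (poissonCDF · m) (-(exp (-t) * (t ^ m / m !))) t :=
  (((hasDerivAt_neg t).exp).mul (hasDerivAt_expPartialSum m t)).congr_deriv (by ring)

theorem poissonCDF_antitoneOn : AntitoneOn (poissonCDF · m) (Set.Ici 0) := by
  refine antitoneOn_of_hasDerivWithinAt_nonpos (convex_Ici 0)
    (fun t _ ↦ (hasDerivAt_poissonCDF m t).continuousAt.continuousWithinAt)
    (fun t _ ↦ (hasDerivAt_poissonCDF m t).hasDerivWithinAt) fun t ht ↦ ?_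
  rw [interior_Ici] at ht
  have : 0 ≤ t := ht.le
  simp only [neg_nonpos]
  positivity

theorem add_pow_div_factorial (x y : ℝ) (n : ℕ) :
    (x + y) ^ n / n ! = ∑ k ∈ range (n + 1), x ^ k / k ! * (y ^ (n - k) / (n - k)!) := by
  rw [add_pow, sum_div]
  refine sum_congr rfl fun k hk ↦ ?_
  have hkn := Nat.lt_succ_iff.mp (mem_range.mp hk)
  have hchoose : (n.choose k : ℝ) ≠ 0 := Nat.cast_ne_zero.2 (Nat.choose_pos hkn).ne'
  rw [← Nat.choose_mul_factorial_mul_factorial hkn]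
  push_cast
  field_simp

theorem expPartialSum_add (x y : ℝ) :
    expPartialSum m (x + y) = ∑ j ∈ range (m + 1), x ^ j / j ! * expPartialSum (m - j) y := by
  simp_rw [expPartialSum, add_pow_div_factorial]
  rw [sum_range_diag_flip (m + 1) fun k i ↦ x ^ k / k ! * (y ^ i / i !)]
  simp_rw [mul_sum]
  refine sum_congr rfl fun j hj ↦ ?_
  rw [Nat.sub_add_comm (Nat.lt_succ_iff.mp (mem_range.mp hj))]

end expPartialSum

theorem pow_div_factorial_succ (k : ℕ) (c : ℝ) :
    c ^ (k + 1) / (k + 1)! = c ^ k / k ! * (c / (k + 1)) := by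
  rw [Nat.factorial_succ]
  push_cast
  field_simp
  ring

theorem pow_div_factorial_le_pow_div_factorial {c : ℝ} {j m : ℕ} (hjm : j ≤ m) (hc : (m : ℝ) ≤ c) :
    c ^ j / j ! ≤ c ^ m / m ! := by
  induction m, hjm using Nat.le_induction with
  | base => exact le_rfl
  | succ k hjk ih =>
    push_cast at hc
    rw [pow_div_factorial_succ]
    have hc0 : 0 ≤ c := by linarith [k.cast_nonneg (α := ℝ)]
    have hk : 1 ≤ c / (k + 1) := by rw [one_le_div (by positivity)]; exact hc
    calc c ^ j / j ! ≤ c ^ k / k ! := ih (by linarith)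
      _ ≤ c ^ k / k ! * (c / (k + 1)) := le_mul_of_one_le_right (by positivity) hk

theorem expTail_nonneg (r : ℕ) : 0 ≤ expTail r :=
  sub_nonneg.2 (expPartialSum_le_exp r zero_le_one)

theorem expTail_eq_expTail_succ_add (r : ℕ) : expTail r = expTail (r + 1) + 1 / (r + 1)! := by
  simp only [expTail, expPartialSum_succ, one_pow]
  ring

theorem inv_factorial_add_inv_factorial_le_expTail (r : ℕ) :
    1 / (r + 1)! + 1 / (r + 2)! ≤ expTail r := by
  have := expTail_nonneg (r + 2)
  rw [expTail_eq_expTail_succ_add r, expTail_eq_expTail_succ_add (r + 1)]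
  linarith

theorem mul_expTail_le (r : ℕ) : r * expTail r ≤ 1 / r ! := by
  have h := exp_bound' zero_le_one le_rfl (Nat.succ_pos r)
  simp only [one_pow, one_mul, Nat.succ_eq_add_one, Nat.factorial_succ] at h
  push_cast at h
  have htail : expTail r ≤ (r + 1 + 1) / ((r + 1) * r ! * (r + 1)) := by
    rw [expTail, expPartialSum]
    simp only [one_pow]
    linarith
  calc (r : ℝ) * expTail r ≤ r * ((r + 1 + 1) / ((r + 1) * r ! * (r + 1))) := by gcongr
    _ ≤ 1 / r ! := by
      rw [mul_div_assoc', div_le_div_iff₀ (by positivity) (by positivity)]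
      nlinarith [(Nat.cast_pos.mpr (Nat.factorial_pos r) : (0 : ℝ) < r !)]

theorem sum_range_expTail_succ (R : ℕ) :
    ∑ r ∈ range R, expTail (r + 1) = 1 + R * expTail R - 1 / R ! := by
  induction R with
  | zero => simp
  | succ R ih =>
    rw [sum_range_succ, ih, expTail_eq_expTail_succ_add R, Nat.factorial_succ]
    push_cast
    field_simp
    ring

theorem sum_range_expTail_succ_le_one (R : ℕ) : ∑ r ∈ range R, expTail (r + 1) ≤ 1 := by
  rw [sum_range_expTail_succ]
  linarith [mul_expTail_le R]

/-- The weights are the lower bounds `1 / (r + 1)! + 1 / (r + 2)!` of `expTail r` for `r = 2, …, 5`,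
and `m (m - 1) ⋯ (m - r + 1) / c ^ r` is the ratio of `c ^ (m - r) / (m - r)!` to `c ^ m / m !`. -/
theorem one_sub_sum_falling_ratio_le {m c : ℝ} (hm : 5 ≤ m) (hc : m + 69 / 100 ≤ c) :
    1 - (5 / 24 * (1 - m / c) + 1 / 20 * (1 - m * (m - 1) / c ^ 2)
      + 7 / 720 * (1 - m * (m - 1) * (m - 2) / c ^ 3)
      + 1 / 630 * (1 - m * (m - 1) * (m - 2) * (m - 3) / c ^ 4)) ≤ c / (m + 1) := by
  obtain ⟨a, ha, rfl⟩ : ∃ a, 0 ≤ a ∧ m = 5 + a := ⟨m - 5, by linarith, by ring⟩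
  obtain ⟨b, hb, rfl⟩ : ∃ b, 0 ≤ b ∧ c = 5 + a + 69 / 100 + b :=
    ⟨c - (5 + a + 69 / 100), by linarith, by ring⟩
  rw [← sub_nonneg]
  have hc : 0 < 5 + a + 69 / 100 + b := by positivity
  field_simp
  ring_nf
  positivity

/-- Since `n + 4 ≤ c`, the terms `c ^ j / j !` increase up to `j = n + 4`, and the tails
`expTail (r + 1)` add up to at most `1`; of the deficit below the top term only the four nearest
terms are kept. -/
theorem sum_pow_div_factorial_mul_expTail_le_sub {c : ℝ} {n : ℕ} (hc : (n : ℝ) + 4 ≤ c) :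
    ∑ j ∈ range (n + 5), c ^ j / j ! * expTail (n + 5 - j) ≤ c ^ (n + 4) / (n + 4)! -
      (5 / 24 * (c ^ (n + 4) / (n + 4)! - c ^ (n + 3) / (n + 3)!)
        + 1 / 20 * (c ^ (n + 4) / (n + 4)! - c ^ (n + 2) / (n + 2)!)
        + 7 / 720 * (c ^ (n + 4) / (n + 4)! - c ^ (n + 1) / (n + 1)!)
        + 1 / 630 * (c ^ (n + 4) / (n + 4)! - c ^ n / n !)) := by
  set T : ℕ → ℝ := fun k ↦ c ^ k / (k ! : ℝ)
  have hTmax : ∀ j ∈ range (n + 5), T j ≤ T (n + 4) := fun j hj ↦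
    pow_div_factorial_le_pow_div_factorial (by simp at hj; omega) (by push_cast; linarith)
  have htail : ∑ j ∈ range (n + 5), expTail (n + 5 - j) ≤ 1 := by
    rw [← sum_range_reflect]
    convert sum_range_expTail_succ_le_one (n + 5) using 2 with j hj
    congr 1
    simp at hj
    omega
  have hsplit : ∑ j ∈ range (n + 5), T j * expTail (n + 5 - j)
      = T (n + 4) * ∑ j ∈ range (n + 5), expTail (n + 5 - j)
        - ∑ j ∈ range (n + 5), (T (n + 4) - T j) * expTail (n + 5 - j) := by
    rw [mul_sum, ← sum_sub_distrib]
    exact sum_congr rfl fun _ _ ↦ by ring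
  have hgap : ∀ j ∈ range (n + 5), 0 ≤ (T (n + 4) - T j) * expTail (n + 5 - j) :=
    fun j hj ↦ mul_nonneg (sub_nonneg.2 (hTmax j hj)) (expTail_nonneg _)
  have hdrop : 5 / 24 * (T (n + 4) - T (n + 3)) + 1 / 20 * (T (n + 4) - T (n + 2))
      + 7 / 720 * (T (n + 4) - T (n + 1)) + 1 / 630 * (T (n + 4) - T n)
      ≤ ∑ j ∈ range (n + 5), (T (n + 4) - T j) * expTail (n + 5 - j) := by
    have hd (r : ℕ) (d : ℝ) (hd : d = 1 / (r + 1)! + 1 / (r + 2)!) : d ≤ expTail r :=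
      hd ▸ inv_factorial_add_inv_factorial_le_expTail r
    have hrest : 0 ≤ ∑ j ∈ range n, (T (n + 4) - T j) * expTail (n + 5 - j) :=
      sum_nonneg fun j hj ↦ hgap j (by simp at hj ⊢; omega)
    have hT3 := sub_nonneg.2 (hTmax (n + 3) (by simp))
    have hT2 := sub_nonneg.2 (hTmax (n + 2) (by simp))
    have hT1 := sub_nonneg.2 (hTmax (n + 1) (by simp))
    have hT0 := sub_nonneg.2 (hTmax n (by simp))
    simp only [sum_range_succ, Nat.add_sub_add_left, Nat.add_sub_cancel_left]
    norm_num
    linarith [mul_le_mul_of_nonneg_left (hd 2 (5 / 24) (by norm_num [Nat.factorial])) hT3,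
      mul_le_mul_of_nonneg_left (hd 3 (1 / 20) (by norm_num [Nat.factorial])) hT2,
      mul_le_mul_of_nonneg_left (hd 4 (7 / 720) (by norm_num [Nat.factorial])) hT1,
      mul_le_mul_of_nonneg_left (hd 5 (1 / 630) (by norm_num [Nat.factorial])) hT0]
  have hc0 : 0 ≤ c := by linarith [n.cast_nonneg (α := ℝ)]
  have hT4 : 0 ≤ T (n + 4) := by positivity
  show ∑ j ∈ range (n + 5), T j * expTail (n + 5 - j) ≤ T (n + 4) -
    (5 / 24 * (T (n + 4) - T (n + 3)) + 1 / 20 * (T (n + 4) - T (n + 2))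
      + 7 / 720 * (T (n + 4) - T (n + 1)) + 1 / 630 * (T (n + 4) - T n))
  rw [hsplit]
  linarith [mul_le_mul_of_nonneg_left htail hT4]

theorem sum_pow_div_factorial_mul_expTail_le {c : ℝ} {m : ℕ} (hm : 5 ≤ m) (hc : m + 69 / 100 ≤ c) :
    ∑ j ∈ range (m + 1), c ^ j / j ! * expTail (m + 1 - j) ≤ c ^ (m + 1) / (m + 1)! := by
  obtain ⟨n, rfl⟩ : ∃ n, m = n + 4 := ⟨m - 4, by omega⟩
  push_cast at hc ⊢
  have hc0 : 0 < c := by linarith [n.cast_nonneg (α := ℝ)]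
  set T : ℕ → ℝ := fun k ↦ c ^ k / (k ! : ℝ)
  have hT (k : ℕ) : T k = T (k + 1) * ((k + 1) / c) := by
    simp only [T, pow_div_factorial_succ]
    field_simp
  have h3 : T (n + 3) = T (n + 4) * ((n + 4) / c) := by rw [hT (n + 3)]; push_cast; ring_nf
  have h2 : T (n + 2) = T (n + 3) * ((n + 3) / c) := by rw [hT (n + 2)]; push_cast; ring_nf
  have h1 : T (n + 1) = T (n + 2) * ((n + 2) / c) := by rw [hT (n + 1)]; push_cast; ring_nf
  have h5 : T (n + 5) = T (n + 4) * (c / (n + 4 + 1)) := by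
    rw [hT (n + 4)]; push_cast; field_simp
  calc ∑ j ∈ range (n + 5), T j * expTail (n + 5 - j)
    _ ≤ T (n + 4) - (5 / 24 * (T (n + 4) - T (n + 3)) + 1 / 20 * (T (n + 4) - T (n + 2))
      + 7 / 720 * (T (n + 4) - T (n + 1)) + 1 / 630 * (T (n + 4) - T n)) :=
        sum_pow_div_factorial_mul_expTail_le_sub (by linarith)
    _ = T (n + 4) * (1 - (5 / 24 * (1 - (n + 4) / c) + 1 / 20 * (1 - (n + 4) * (n + 4 - 1) / c ^ 2)
      + 7 / 720 * (1 - (n + 4) * (n + 4 - 1) * (n + 4 - 2) / c ^ 3)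
      + 1 / 630 * (1 - (n + 4) * (n + 4 - 1) * (n + 4 - 2) * (n + 4 - 3) / c ^ 4))) := by
        rw [hT n, h1, h2, h3]
        ring
    _ ≤ T (n + 4) * (c / (n + 4 + 1)) := by
        gcongr
        exact one_sub_sum_falling_ratio_le (by exact_mod_cast hm) hc
    _ = T (n + 5) := h5.symm

theorem exp_one_mul_expPartialSum_le {c : ℝ} {m : ℕ} (hm : 5 ≤ m) (hc : m + 69 / 100 ≤ c) :
    exp 1 * expPartialSum m c ≤ expPartialSum (m + 1) (c + 1) := by
  have hsplit : ∑ j ∈ range (m + 1), c ^ j / j ! * expPartialSum (m + 1 - j) 1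
      = exp 1 * expPartialSum m c - ∑ j ∈ range (m + 1), c ^ j / j ! * expTail (m + 1 - j) := by
    rw [expPartialSum, mul_sum, ← sum_sub_distrib]
    exact sum_congr rfl fun j _ ↦ by rw [expTail]; ring
  have hone : expPartialSum 0 1 = 1 := by simp [expPartialSum]
  rw [expPartialSum_add, sum_range_succ, Nat.sub_self, hsplit, hone]
  linarith [sum_pow_div_factorial_mul_expTail_le hm hc]

theorem poissonCDF_le_poissonCDF_add_one {c : ℝ} {m : ℕ} (hm : 5 ≤ m) (hc : m + 69 / 100 ≤ c) :
    poissonCDF c m ≤ poissonCDF (c + 1) (m + 1) := by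
  calc poissonCDF c m = exp (-(c + 1)) * (exp 1 * expPartialSum m c) := by
        rw [poissonCDF, ← mul_assoc, ← exp_add]
        ring_nf
    _ ≤ poissonCDF (c + 1) (m + 1) := by
        rw [poissonCDF]
        gcongr
        exact exp_one_mul_expPartialSum_le hm hc

theorem poissonCDF_add_log_two_le {m M : ℕ} (hm : 5 ≤ m) (hmM : m ≤ M) :
    poissonCDF (m + log 2) m ≤ poissonCDF (M + log 2) M := by
  induction M, hmM using Nat.le_induction with
  | base => exact le_rfl
  | succ M hM ih =>
    refine ih.trans ?_
    have := poissonCDF_le_poissonCDF_add_one (c := M + log 2) (m := M) (by omega)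
      (by linarith [log_two_gt_d9])
    push_cast
    rwa [add_right_comm]

theorem factorial_add_le_factorial_sub_mul_pow {m k : ℕ} (hk : k ≤ m) :
    (m + 1 + k)! ≤ (m - k)! * (m + 1) ^ (2 * k + 1) := by
  induction k with
  | zero => simp [Nat.factorial_succ, mul_comm]
  | succ k ih =>
    obtain ⟨d, rfl⟩ : ∃ d, m = k + 1 + d := ⟨m - (k + 1), by omega⟩
    have ih := ih (by omega)
    rw [show k + 1 + d - k = d + 1 by omega, Nat.factorial_succ] at ih
    rw [show k + 1 + d - (k + 1) = d by omega,
      show k + 1 + d + 1 + (k + 1) = (k + 1 + d + 1 + k) + 1 by ring, Nat.factorial_succ]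
    calc (k + 1 + d + 1 + k + 1) * (k + 1 + d + 1 + k)!
        ≤ (k + 1 + d + 1 + k + 1) * ((d + 1) * d ! * (k + 1 + d + 1) ^ (2 * k + 1)) := by gcongr
      _ = ((k + 1 + d + 1 + k + 1) * (d + 1)) * (d ! * (k + 1 + d + 1) ^ (2 * k + 1)) := by ring
      _ ≤ (k + 1 + d + 1) ^ 2 * (d ! * (k + 1 + d + 1) ^ (2 * k + 1)) := by gcongr; nlinarith
      _ = d ! * (k + 1 + d + 1) ^ (2 * (k + 1) + 1) := by ring

theorem pow_div_factorial_mul_pow_le {c : ℝ} {m j : ℕ} (hj : j ≤ m) (hc : 0 ≤ c) :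
    c ^ (m - j) / (m - j)! * (c / (m + 1)) ^ (2 * j + 1) ≤ c ^ (m + 1 + j) / (m + 1 + j)! := by
  have hfac : ((m + 1 + j)! : ℝ) ≤ (m - j)! * (m + 1) ^ (2 * j + 1) := by
    exact_mod_cast factorial_add_le_factorial_sub_mul_pow hj
  calc c ^ (m - j) / (m - j)! * (c / (m + 1)) ^ (2 * j + 1)
      = c ^ (m + 1 + j) / ((m - j)! * (m + 1) ^ (2 * j + 1)) := by
        rw [div_pow, div_mul_div_comm, ← pow_add, show m - j + (2 * j + 1) = m + 1 + j by omega]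
    _ ≤ c ^ (m + 1 + j) / (m + 1 + j)! := by gcongr

theorem sum_range_mul_pow_div_factorial (m : ℕ) (c : ℝ) :
    ∑ k ∈ range (m + 1), k * (c ^ k / k !) = c * (expPartialSum m c - c ^ m / m !) := by
  induction m with
  | zero => simp [expPartialSum]
  | succ m ih =>
    rw [sum_range_succ, ih, expPartialSum_succ, pow_div_factorial_succ]
    push_cast
    field_simp
    ring

theorem sum_range_pow_div_factorial_mul_odd (m : ℕ) (c a : ℝ) :
    ∑ j ∈ range (m + 1), c ^ (m - j) / (m - j)! * (1 + (2 * j + 1 : ℕ) * a)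
      = expPartialSum m c
        + a * ((2 * m + 1 - 2 * c) * expPartialSum m c + 2 * c * (c ^ m / m !)) := by
  have hterm : ∀ j ∈ range (m + 1),
      c ^ (m - (m + 1 - 1 - j)) / (m - (m + 1 - 1 - j))! * (1 + (2 * (m + 1 - 1 - j) + 1 : ℕ) * a)
        = c ^ j / j ! + a * ((2 * m + 1) * (c ^ j / j !) - 2 * (j * (c ^ j / j !))) := by
    intro j hj
    have hjm := Nat.lt_succ_iff.mp (mem_range.mp hj)
    rw [show m + 1 - 1 - j = m - j by omega, show m - (m - j) = j by omega]
    push_cast [Nat.cast_sub hjm]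
    ring
  rw [← sum_range_reflect, sum_congr rfl hterm, sum_add_distrib, ← mul_sum, sum_sub_distrib,
    ← mul_sum, ← mul_sum, sum_range_mul_pow_div_factorial]
  rw [expPartialSum]
  ring

/-- The term of index `m - j` of the exponential series is paired with the one of index
`m + 1 + j`, which is at least `(c / (m + 1)) ^ (2 * j + 1)` times as large. -/
theorem two_mul_expPartialSum_le {c : ℝ} {m : ℕ} (hc₁ : m + 1 / 2 ≤ c) (hc₂ : c ≤ m + 1) :
    2 * expPartialSum m c ≤ exp c + 2 * (m + 1 - c) * (c ^ m / m !) := by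
  set ρ := c / (m + 1)
  have hc : 0 ≤ c := by linarith [m.cast_nonneg (α := ℝ)]
  have hρ : ρ ≤ 1 := div_le_one_of_le₀ hc₂ (by positivity)
  have hexp : expPartialSum m c + ∑ j ∈ range (m + 1), c ^ (m + 1 + j) / (m + 1 + j)! ≤ exp c := by
    have := expPartialSum_le_exp (m + (m + 1)) hc
    rwa [expPartialSum, show m + (m + 1) + 1 = m + 1 + (m + 1) by ring, sum_range_add] at this
  have hpair : ∀ j ∈ range (m + 1),
      c ^ (m - j) / (m - j)! * (1 + (2 * j + 1 : ℕ) * (ρ - 1)) ≤ c ^ (m + 1 + j) / (m + 1 + j)! :=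
    fun j hj ↦ by
      refine le_trans ?_ (pow_div_factorial_mul_pow_le (Nat.lt_succ_iff.mp (mem_range.mp hj)) hc)
      have := one_add_mul_le_pow (a := ρ - 1) (by linarith [show 0 ≤ ρ by positivity]) (2 * j + 1)
      rw [add_sub_cancel] at this
      gcongr
  have hsum := sum_le_sum hpair
  rw [sum_range_pow_div_factorial_mul_odd] at hsum
  have hS : 0 ≤ (ρ - 1) * (2 * m + 1 - 2 * c) * expPartialSum m c :=
    mul_nonneg (mul_nonneg_of_nonpos_of_nonpos (by linarith) (by linarith))
      (expPartialSum_nonneg m hc)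
  have hρc : (1 - ρ) * c ≤ m + 1 - c := by
    rw [one_sub_div (by positivity), div_mul_eq_mul_div, div_le_iff₀ (by positivity)]
    nlinarith
  have hT : 0 ≤ c ^ m / m ! := by positivity
  nlinarith [mul_le_mul_of_nonneg_right hρc hT]

theorem pow_mul_exp_neg_le {c : ℝ} (m : ℕ) (hc : 0 ≤ c) : c ^ m * exp (-c) ≤ m ^ m * exp (-m) := by
  rcases Nat.eq_zero_or_pos m with rfl | hm
  · simpa using hc
  have hm' : (0 : ℝ) < m := Nat.cast_pos.mpr hm
  have hbase : c / m ≤ exp (c / m - 1) := by linarith [add_one_le_exp (c / m - 1)]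
  have hpow : (c / m) ^ m ≤ exp (c - m) := by
    calc (c / m) ^ m ≤ exp (c / m - 1) ^ m := by gcongr
      _ = exp (c - m) := by rw [← exp_nat_mul]; congr 1; field_simp
  calc c ^ m * exp (-c) = m ^ m * (c / m) ^ m * exp (-c) := by rw [div_pow]; field_simp
    _ ≤ m ^ m * exp (c - m) * exp (-c) := by gcongr
    _ = m ^ m * exp (-m) := by rw [mul_assoc, ← exp_add]; ring_nf

theorem pow_div_factorial_mul_exp_neg_le {c : ℝ} {m : ℕ} (hm : m ≠ 0) (hc : 0 ≤ c) :
    c ^ m / m ! * exp (-c) ≤ 1 / √(2 * π * m) := by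
  have hstirling := Stirling.le_factorial_stirling m
  rw [div_pow, ← exp_nat_mul, mul_one, div_eq_mul_inv, ← exp_neg] at hstirling
  have hsqrt : 0 < √(2 * π * m) := by positivity
  rw [div_mul_eq_mul_div, div_le_div_iff₀ (by positivity) hsqrt, one_mul]
  calc c ^ m * exp (-c) * √(2 * π * m) ≤ m ^ m * exp (-m) * √(2 * π * m) :=
        mul_le_mul_of_nonneg_right (pow_mul_exp_neg_le m hc) hsqrt.le
    _ ≤ m ! := by linarith

theorem poissonCDF_le_half_add {c : ℝ} {m : ℕ} (hm : m ≠ 0) (hc₁ : m + 1 / 2 ≤ c)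
    (hc₂ : c ≤ m + 1) : poissonCDF c m ≤ 1 / 2 + 1 / √(2 * π * m) := by
  have hc : 0 ≤ c := by linarith [m.cast_nonneg (α := ℝ)]
  have hmass := pow_div_factorial_mul_exp_neg_le hm hc
  have hcdf : 2 * poissonCDF c m ≤ 1 + 2 * (m + 1 - c) * (c ^ m / m ! * exp (-c)) := by
    have := mul_le_mul_of_nonneg_left (two_mul_expPartialSum_le hc₁ hc₂) (exp_pos (-c)).le
    rw [poissonCDF]
    rw [mul_add, ← exp_add, neg_add_cancel, exp_zero] at this
    linarith
  have : 0 ≤ c ^ m / m ! * exp (-c) := by positivity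
  nlinarith

theorem tendsto_half_add_one_div_sqrt :
    Tendsto (fun M : ℕ ↦ 1 / 2 + 1 / √(2 * π * M)) atTop (𝓝 (1 / 2)) := by
  have h : Tendsto (fun M : ℕ ↦ √(2 * π * M)) atTop atTop :=
    tendsto_sqrt_atTop.comp (tendsto_natCast_atTop_atTop.const_mul_atTop (by positivity))
  simpa using tendsto_const_nhds.add (h.inv_tendsto_atTop)

theorem poissonCDF_add_log_two_le_half_of_le_four {m : ℕ} (hm : m ≤ 4) :
    poissonCDF (m + log 2) m ≤ 1 / 2 := by
  have hS : expPartialSum m (m + log 2) ≤ exp m := by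
    calc expPartialSum m (m + log 2) ≤ expPartialSum m (m + 0.6931471808) :=
          expPartialSum_le_expPartialSum m (by positivity) (by linarith [log_two_lt_d9])
      _ ≤ 2.7182818283 ^ m := by
          interval_cases m <;> norm_num [expPartialSum, sum_range_succ, Nat.factorial]
      _ ≤ exp 1 ^ m := by gcongr; exact exp_one_gt_d9.le
      _ = exp m := by rw [← exp_nat_mul, mul_one]
  rw [poissonCDF, neg_add, exp_add, exp_neg, exp_neg, exp_log two_pos]
  calc (exp m)⁻¹ * 2⁻¹ * expPartialSum m (m + log 2) ≤ (exp m)⁻¹ * 2⁻¹ * exp m := by gcongr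
    _ = 1 / 2 := by field_simp

theorem poissonCDF_add_log_two_le_half (m : ℕ) : poissonCDF (m + log 2) m ≤ 1 / 2 := by
  rcases le_or_gt m 4 with hm | hm
  · exact poissonCDF_add_log_two_le_half_of_le_four hm
  refine ge_of_tendsto tendsto_half_add_one_div_sqrt ?_
  filter_upwards [eventually_ge_atTop m] with M hM
  refine (poissonCDF_add_log_two_le hm hM).trans (poissonCDF_le_half_add (by omega) ?_ ?_)
  · linarith [log_two_gt_d9]
  · linarith [log_two_lt_d9]

theorem two_mul_expPartialSum_le_exp {m : ℕ} {t : ℝ} (ht : m + log 2 ≤ t) :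
    2 * expPartialSum m t ≤ exp t := by
  have h₀ : (0 : ℝ) ≤ m + log 2 := by positivity
  have hcdf : poissonCDF t m ≤ 1 / 2 :=
    (poissonCDF_antitoneOn m h₀ (h₀.trans ht) ht).trans (poissonCDF_add_log_two_le_half m)
  rw [poissonCDF, exp_neg] at hcdf
  rwa [inv_mul_le_iff₀ (exp_pos t), mul_one_div, le_div_iff₀ two_pos, mul_comm] at hcdf

/-- For `F_m(t) = 2 ∑_{k=0}^m t^k/k! - e^t`:
`F_m(t) ≤ 0` for `t ≥ m + log 2`, `F_m(t) ≤ 2 e^m` on `[0, m + log 2]`,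
and hence `F_m(t) ≤ 2 e^m` for all `t ≥ 0`. -/
theorem stmt10 (m : ℕ) :
    (∀ t : ℝ, (m : ℝ) + Real.log 2 ≤ t →
      2 * (∑ k ∈ Finset.range (m+1), t ^ k / (Nat.factorial k : ℝ)) - Real.exp t ≤ 0) ∧
    (∀ t : ℝ, t ∈ Set.Icc (0:ℝ) ((m : ℝ) + Real.log 2) →
      2 * (∑ k ∈ Finset.range (m+1), t ^ k / (Nat.factorial k : ℝ)) - Real.exp t
        ≤ 2 * Real.exp m) ∧
    (∀ t : ℝ, 0 ≤ t →
      2 * (∑ k ∈ Finset.range (m+1), t ^ k / (Nat.factorial k : ℝ)) - Real.exp t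
        ≤ 2 * Real.exp m) := by
  have h₁ (t : ℝ) (ht : m + log 2 ≤ t) : 2 * expPartialSum m t - exp t ≤ 0 :=
    sub_nonpos.2 (two_mul_expPartialSum_le_exp ht)
  have h₂ (t : ℝ) (ht : t ∈ Set.Icc 0 (m + log 2)) : 2 * expPartialSum m t - exp t ≤ 2 * exp m := by
    have hexp : exp t ≤ 2 * exp m := by
      calc exp t ≤ exp (m + log 2) := exp_le_exp.2 ht.2
        _ = 2 * exp m := by rw [exp_add, exp_log two_pos, mul_comm]
    linarith [expPartialSum_le_exp m ht.1]
  refine ⟨h₁, h₂, fun t ht₀ ↦ ?_⟩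
  change 2 * expPartialSum m t - exp t ≤ 2 * exp m
  rcases le_total t (m + log 2) with ht | ht
  · exact h₂ t ⟨ht₀, ht⟩
  · linarith [h₁ t ht, exp_pos (m : ℝ)]
end

section
/- Let μ and ν be probability measures on a measurable space with μ ≪ ν, let θ > 0 and A ≥ max(1, 2^{⌈2/θ⌉−2}·(⌈2/θ⌉)!), and let r ≥ 0 be a measurable function with r ∈ L¹(μ) and exp(r^θ) ∈ L¹(ν). Then E_μ[r] ≤ 2^{1/θ} D_{f_θ}(μ‖ν) + E_ν[exp(r^θ)], where f_θ(x) = x·(log(x+A))^{1/θ} and D_{f_θ}(μ‖ν) = ∫ f_θ(dμ/dν) dν. -/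
open Real MeasureTheory

lemma aux_pow_div_factorial_le_exp {t : ℝ} (ht : 0 ≤ t) (k : ℕ) :
    t ^ k / k.factorial ≤ Real.exp t := by
  refine le_trans ?_ (Real.sum_le_exp_of_nonneg ht (k + 1))
  exact Finset.single_le_sum (f := fun i => t ^ i / i.factorial)
    (fun i _ => by positivity) (Finset.self_mem_range_succ k)

lemma aux_key {θ A x y : ℝ} (hθ : 0 < θ) (hA1 : 1 ≤ A)
    (hA2 : (2:ℝ) ^ ((⌈2/θ⌉₊ : ℝ) - 2) * (Nat.factorial ⌈2/θ⌉₊ : ℝ) ≤ A)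
    (hx : 0 ≤ x) (hy : 0 ≤ y) :
    x * y ≤ 2 ^ (1/θ) * (x * (Real.log (x + A)) ^ (1/θ)) + Real.exp (y ^ θ) := by
  have hlog : 0 ≤ Real.log (x + A) := Real.log_nonneg (by linarith)
  by_cases hcase : y ^ θ ≤ 2 * Real.log (x + A)
  · have hy' : y ≤ 2 ^ (1/θ) * (Real.log (x + A)) ^ (1/θ) := by
      calc y = (y ^ θ) ^ (1/θ) := by
              rw [← Real.rpow_mul hy, mul_one_div, div_self hθ.ne', Real.rpow_one]
        _ ≤ (2 * Real.log (x + A)) ^ (1/θ) :=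
              Real.rpow_le_rpow (Real.rpow_nonneg hy θ) hcase (by positivity)
        _ = 2 ^ (1/θ) * (Real.log (x + A)) ^ (1/θ) :=
              Real.mul_rpow (by norm_num) hlog
    have h1 := mul_le_mul_of_nonneg_left hy' hx
    have h2 : (0:ℝ) ≤ Real.exp (y ^ θ) := (Real.exp_pos _).le
    nlinarith [h1, h2]
  · push_neg at hcase
    set k := ⌈2/θ⌉₊ with hk
    set E := Real.exp (y ^ θ / 2) with hE
    have hEpos : 0 < E := Real.exp_pos _
    have hE1 : x + A < E := by
      have h : Real.log (x + A) < y ^ θ / 2 := by linarith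
      calc x + A = Real.exp (Real.log (x + A)) := (Real.exp_log (by linarith)).symm
        _ < E := Real.exp_lt_exp.2 h
    have hexpE : Real.exp (y ^ θ) = E ^ 2 := by
      rw [hE, sq, ← Real.exp_add]; ring_nf
    have htnn : 0 ≤ y ^ θ := Real.rpow_nonneg hy θ
    have hy2 : y ^ 2 ≤ 4 * A * E := by
      by_cases hy1 : y ≤ 1
      · nlinarith
      · push_neg at hy1
        have hkθ : (2:ℝ) ≤ (k : ℝ) * θ := by
          have h := Nat.le_ceil (2/θ)
          rw [← hk] at h
          calc (2:ℝ) = (2/θ) * θ := by field_simp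
            _ ≤ (k : ℝ) * θ := by nlinarith
        have h1 : y ^ (2:ℝ) ≤ y ^ ((k:ℝ) * θ) :=
          Real.rpow_le_rpow_of_exponent_le hy1.le hkθ
        have h2 : y ^ ((k:ℝ) * θ) = (y ^ θ) ^ k := by
          rw [mul_comm, Real.rpow_mul hy, Real.rpow_natCast]
        have h3 : (y ^ θ / 2) ^ k / k.factorial ≤ E :=
          aux_pow_div_factorial_le_exp (by positivity) k
        have h4 : (y ^ θ) ^ k ≤ 2 ^ k * k.factorial * E := by
          have : (y ^ θ / 2) ^ k = (y ^ θ) ^ k / 2 ^ k := div_pow _ _ _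
          rw [this] at h3
          have hf : (0:ℝ) < k.factorial := by positivity
          have h2k : (0:ℝ) < (2:ℝ) ^ k := by positivity
          calc (y ^ θ) ^ k = ((y ^ θ) ^ k / 2 ^ k / k.factorial) * (2 ^ k * k.factorial) := by
                field_simp
            _ ≤ E * (2 ^ k * k.factorial) := by
                apply mul_le_mul_of_nonneg_right h3 (by positivity)
            _ = 2 ^ k * k.factorial * E := by ring
        have h5 : (2:ℝ) ^ k * k.factorial ≤ 4 * A := by
          have : (2:ℝ) ^ ((k:ℝ) - 2) = 2 ^ (k:ℝ) / 2 ^ (2:ℝ) := Real.rpow_sub two_pos _ _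
          have h6 : (2:ℝ) ^ ((k:ℝ) - 2) * (k.factorial : ℝ) = 2 ^ k * k.factorial / 4 := by
            rw [this]
            rw [Real.rpow_natCast]
            norm_num
            ring
          rw [h6] at hA2
          linarith
        have h7 : y ^ (2:ℝ) = y ^ 2 := by
          rw [← Real.rpow_natCast y 2]; norm_num
        rw [h7, h2] at h1
        nlinarith [h1, h4, h5, hEpos]
    -- now show x * y ≤ E ^ 2
    have hfirst : (0:ℝ) ≤ 2 ^ (1/θ) * (x * (Real.log (x + A)) ^ (1/θ)) := by positivity
    rw [hexpE]
    have hxE : x ≤ E - A := by linarith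
    have hAE : A ≤ E := by linarith
    have h6 : 4 * A * (E - A) ^ 2 ≤ E ^ 3 := by
      nlinarith [sq_nonneg (E - 3*A), mul_nonneg (sub_nonneg.2 hAE) (sq_nonneg (E - 3*A)),
        mul_nonneg (by linarith : (0:ℝ) ≤ A) (sq_nonneg (E - 3*A)),
        mul_nonneg (mul_nonneg (by linarith : (0:ℝ) ≤ A) (sub_nonneg.2 hAE)) (sub_nonneg.2 hAE)]
    have h7 : (x * y) ^ 2 ≤ (E ^ 2) ^ 2 := by
      have hx2 : x ^ 2 ≤ (E - A) ^ 2 := by nlinarith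
      calc (x * y) ^ 2 = x ^ 2 * y ^ 2 := by ring
        _ ≤ (E - A) ^ 2 * (4 * A * E) := by
            apply mul_le_mul hx2 hy2 (sq_nonneg y) (sq_nonneg _)
        _ = (4 * A * (E - A) ^ 2) * E := by ring
        _ ≤ E ^ 3 * E := mul_le_mul_of_nonneg_right h6 hEpos.le
        _ = (E ^ 2) ^ 2 := by ring
    have h8 : x * y ≤ E ^ 2 :=
      (pow_le_pow_iff_left₀ (mul_nonneg hx hy) (sq_nonneg E) two_ne_zero).mp h7
    linarith

/-- Decorrelation lemma: for probability measures `μ ≪ ν`, `θ > 0`,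
`A ≥ max(1, 2^{⌈2/θ⌉-2} ⌈2/θ⌉!)`, and measurable `r ≥ 0` with `r ∈ L¹(μ)` and
`exp(r^θ) ∈ L¹(ν)`, one has
`E_μ[r] ≤ 2^{1/θ} D_{f_θ}(μ‖ν) + E_ν[exp(r^θ)]`, where
`f_θ(x) = x (log(x+A))^{1/θ}` and the divergence is the (possibly infinite)
lower integral of `f_θ(dμ/dν)` with respect to `ν`. -/
theorem stmt11 {Ω : Type*} [MeasurableSpace Ω] (μ ν : Measure Ω)
    [IsProbabilityMeasure μ] [IsProbabilityMeasure ν] (hμν : μ ≪ ν)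
    (θ A : ℝ) (hθ : 0 < θ)
    (hA : max 1 ((2:ℝ) ^ ((⌈2/θ⌉₊ : ℝ) - 2) * (Nat.factorial ⌈2/θ⌉₊ : ℝ)) ≤ A)
    (r : Ω → ℝ) (hr : Measurable r) (hr0 : ∀ ω, 0 ≤ r ω)
    (hrL1 : Integrable r μ)
    (hexp : Integrable (fun ω => Real.exp (r ω ^ θ)) ν) :
    ENNReal.ofReal (∫ ω, r ω ∂μ)
      ≤ ENNReal.ofReal ((2:ℝ) ^ (1/θ)) *
          (∫⁻ ω, ENNReal.ofReal
            ((μ.rnDeriv ν ω).toReal *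
              (Real.log ((μ.rnDeriv ν ω).toReal + A)) ^ (1/θ)) ∂ν)
        + ENNReal.ofReal (∫ ω, Real.exp (r ω ^ θ) ∂ν) := by
  have hA1 : (1:ℝ) ≤ A := le_trans (le_max_left _ _) hA
  have hA2 : (2:ℝ) ^ ((⌈2/θ⌉₊ : ℝ) - 2) * (Nat.factorial ⌈2/θ⌉₊ : ℝ) ≤ A :=
    le_trans (le_max_right _ _) hA
  have aux_key : ∀ x y : ℝ, 0 ≤ x → 0 ≤ y →
      x * y ≤ 2 ^ (1/θ) * (x * (Real.log (x + A)) ^ (1/θ)) + Real.exp (y ^ θ) :=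
    fun x y hx hy => aux_key hθ hA1 hA2 hx hy

  set g : Ω → ℝ := fun ω => (μ.rnDeriv ν ω).toReal * r ω with hg
  have hint : ∫ ω, r ω ∂μ = ∫ ω, g ω ∂ν := by
    rw [hg]; simp_rw [← smul_eq_mul]
    exact (integral_rnDeriv_smul hμν).symm
  have hgi : Integrable g ν := by
    rw [hg]; simp_rw [← smul_eq_mul]
    exact (integrable_rnDeriv_smul_iff hμν).mpr hrL1
  have hmf : Measurable fun ω => ENNReal.ofReal
      ((μ.rnDeriv ν ω).toReal * (Real.log ((μ.rnDeriv ν ω).toReal + A)) ^ (1/θ)) := by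
    apply Measurable.ennreal_ofReal
    exact ((Measure.measurable_rnDeriv μ ν).ennreal_toReal).mul
      ((Real.continuous_rpow_const (by positivity)).measurable.comp
        (((Measure.measurable_rnDeriv μ ν).ennreal_toReal.add_const A).log))
  calc ENNReal.ofReal (∫ ω, r ω ∂μ) = ENNReal.ofReal (∫ ω, g ω ∂ν) := by rw [hint]
    _ = ∫⁻ ω, ENNReal.ofReal (g ω) ∂ν :=
        ofReal_integral_eq_lintegral_ofReal hgi
          (ae_of_all _ fun ω => mul_nonneg ENNReal.toReal_nonneg (hr0 ω))
    _ ≤ ∫⁻ ω, (ENNReal.ofReal ((2:ℝ) ^ (1/θ)) * ENNReal.ofReal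
            ((μ.rnDeriv ν ω).toReal *
              (Real.log ((μ.rnDeriv ν ω).toReal + A)) ^ (1/θ))
          + ENNReal.ofReal (Real.exp (r ω ^ θ))) ∂ν := by
        apply lintegral_mono
        intro ω
        have hkey := aux_key ((μ.rnDeriv ν ω).toReal) (r ω) ENNReal.toReal_nonneg (hr0 ω)
        calc ENNReal.ofReal (g ω)
            ≤ ENNReal.ofReal ((2:ℝ) ^ (1/θ) * ((μ.rnDeriv ν ω).toReal *
                (Real.log ((μ.rnDeriv ν ω).toReal + A)) ^ (1/θ)) + Real.exp (r ω ^ θ)) :=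
              ENNReal.ofReal_le_ofReal hkey
          _ = _ := by
              have hA1 : (1:ℝ) ≤ A := le_trans (le_max_left _ _) hA
              have hl : 0 ≤ Real.log ((μ.rnDeriv ν ω).toReal + A) :=
                Real.log_nonneg (by linarith [ENNReal.toReal_nonneg (a := μ.rnDeriv ν ω)])
              have hnn : (0:ℝ) ≤ 2 ^ (1/θ) * ((μ.rnDeriv ν ω).toReal *
                  (Real.log ((μ.rnDeriv ν ω).toReal + A)) ^ (1/θ)) :=
                mul_nonneg (Real.rpow_nonneg (by norm_num) _)
                  (mul_nonneg ENNReal.toReal_nonneg (Real.rpow_nonneg hl _))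
              rw [ENNReal.ofReal_add hnn (Real.exp_pos _).le,
                ENNReal.ofReal_mul (by positivity)]
    _ = ENNReal.ofReal ((2:ℝ) ^ (1/θ)) *
          (∫⁻ ω, ENNReal.ofReal
            ((μ.rnDeriv ν ω).toReal *
              (Real.log ((μ.rnDeriv ν ω).toReal + A)) ^ (1/θ)) ∂ν)
        + ∫⁻ ω, ENNReal.ofReal (Real.exp (r ω ^ θ)) ∂ν := by
        rw [lintegral_add_left (hmf.const_mul _), lintegral_const_mul _ hmf]
    _ = _ := by
        rw [ofReal_integral_eq_lintegral_ofReal hexp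
          (ae_of_all _ fun ω => (Real.exp_pos _).le)]
end

section
/- Let X, X_1, …, X_n be i.i.d. real-valued random variables with law μ, and let R_n = max_{1≤i≤n} X_i with law ν. Then for any α > 1, D_α(ν‖μ) ≤ (1/(α−1)) log(n^α/(α(n−1)+1)), and consequently D_α(ν‖μ) ≤ log n. -/
/-!
Let `Q` be the quantile function of `μ₀` and `U` uniform on `(0, 1)`. Then `Q(U)` has law `μ₀`,
and `Q(U₍ₙ₎)` has law `ν`, where `U₍ₙ₎` (the maximum of `n` independent copies of `U`) has density
`g(u) = n u^(n-1)`, because both have distribution function `F^n`.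

Pushing forward along `Q` cannot increase `∫ (dν/dμ₀)^α dμ₀`. With `f = dν/dμ₀`, one has
`∫ f^α dμ₀ = ∫ (f ∘ Q)^(α-1) g dU ≤ (∫ f^α dμ₀)^(1 - 1/α) (∫ g^α dU)^(1/α)` by Hölder. Since
`g ≤ n` gives `f ≤ n`, the left side is finite and can be cancelled. The remaining integral is
`∫₀¹ (n u^(n-1))^α du = n^α / (α(n-1)+1)`, and Bernoulli's inequality `n^α ≥ 1 + α(n-1)` turns
the bound into `log n`.
-/

open Real MeasureTheory ProbabilityTheory Set Filter
open scoped ENNReal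

theorem ENNReal.le_of_le_rpow_mul_rpow {a b : ℝ≥0∞} {p q : ℝ} (hp : 0 < p) (hq : 0 ≤ q)
    (hpq : q + p = 1) (ha : a ≠ ∞) (h : a ≤ a ^ q * b ^ p) : a ≤ b := by
  rcases eq_or_ne a 0 with rfl | ha₀
  · exact zero_le
  have hsplit : a ^ q * a ^ p = a := by
    rw [← ENNReal.rpow_add_of_nonneg _ _ hq hp.le, hpq, ENNReal.rpow_one]
  rwa [← ENNReal.rpow_le_rpow_iff hp, ← ENNReal.mul_le_mul_iff_right
    (ENNReal.rpow_pos (pos_iff_ne_zero.2 ha₀) ha).ne' (ENNReal.rpow_ne_top_of_nonneg hq ha),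
    hsplit]

theorem Real.one_le_rpow_div_mul_sub_one_add_one {x α : ℝ} (hx : 1 ≤ x) (hα : 1 ≤ α) :
    1 ≤ x ^ α / (α * (x - 1) + 1) := by
  have hbernoulli := one_add_mul_self_le_rpow_one_add (s := x - 1) (by linarith) hα
  rw [add_sub_cancel] at hbernoulli
  rw [one_le_div (by nlinarith)]
  linarith

theorem Real.inv_sub_one_mul_log_rpow_div_le_log {x α : ℝ} (hx : 1 ≤ x) (hα : 1 < α) :
    (α - 1)⁻¹ * log (x ^ α / (α * (x - 1) + 1)) ≤ log x := by
  have hx₀ : 0 < x := by linarith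
  have hlog : log x ≤ log (α * (x - 1) + 1) := log_le_log hx₀ (by nlinarith)
  rw [log_div (by positivity) (by nlinarith), log_rpow hx₀, inv_mul_le_iff₀ (sub_pos.2 hα)]
  nlinarith

theorem ENNReal.log_toReal_le_of_le_ofReal {a : ℝ≥0∞} {c : ℝ} (hc : 1 ≤ c)
    (h : a ≤ ENNReal.ofReal c) : Real.log a.toReal ≤ Real.log c := by
  rcases ENNReal.toReal_nonneg.eq_or_lt with h₀ | h₀
  · rw [← h₀, Real.log_zero]
    exact Real.log_nonneg hc
  · exact Real.log_le_log h₀ (ENNReal.toReal_le_of_le_ofReal (by linarith) h)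

namespace MeasureTheory

variable {X Y : Type*} [MeasurableSpace X] [MeasurableSpace Y]

theorem Measure.rnDeriv_le_of_le_smul {μ ν : Measure X} [SigmaFinite μ] {c : ℝ≥0∞}
    (h : ν ≤ c • μ) : ν.rnDeriv μ ≤ᵐ[μ] fun _ ↦ c :=
  ae_le_of_forall_setLIntegral_le_of_sigmaFinite₀ (Measure.measurable_rnDeriv ν μ).aemeasurable
    fun s _ _ ↦ calc
      ∫⁻ x in s, ν.rnDeriv μ x ∂μ ≤ ν s := Measure.setLIntegral_rnDeriv_le s
      _ ≤ c * μ s := h s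
      _ = ∫⁻ _ in s, c ∂μ := by rw [setLIntegral_const, mul_comm]

theorem lintegral_rnDeriv_rpow_ne_top_of_le_smul {μ ν : Measure X} [IsFiniteMeasure μ]
    {c : ℝ≥0∞} (hc : c ≠ ∞) (h : ν ≤ c • μ) {α : ℝ} (hα : 0 ≤ α) :
    ∫⁻ x, ν.rnDeriv μ x ^ α ∂μ ≠ ∞ := by
  refine ne_top_of_le_ne_top (ENNReal.mul_ne_top (ENNReal.rpow_ne_top_of_nonneg hα hc)
    (measure_ne_top μ univ)) ?_
  calc ∫⁻ x, ν.rnDeriv μ x ^ α ∂μ ≤ ∫⁻ _, c ^ α ∂μ :=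
        lintegral_mono_ae ((Measure.rnDeriv_le_of_le_smul h).mono
          fun x hx ↦ ENNReal.rpow_le_rpow hx hα)
    _ = c ^ α * μ univ := lintegral_const _

theorem lintegral_rnDeriv_map_rpow_le {μ : Measure X} [IsFiniteMeasure μ] {g : X → ℝ≥0∞}
    (hg : Measurable g) {Q : X → Y} (hQ : Measurable Q) {α : ℝ} (hα : 1 < α)
    (hfin : ∫⁻ y, ((μ.withDensity g).map Q).rnDeriv (μ.map Q) y ^ α ∂(μ.map Q) ≠ ∞) :
    ∫⁻ y, ((μ.withDensity g).map Q).rnDeriv (μ.map Q) y ^ α ∂(μ.map Q)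
      ≤ ∫⁻ x, g x ^ α ∂μ := by
  set f := ((μ.withDensity g).map Q).rnDeriv (μ.map Q)
  have hf : Measurable f := Measure.measurable_rnDeriv _ _
  have hα₁ : 0 < α - 1 := sub_pos.2 hα
  have hfQ : Measurable fun x ↦ f (Q x) ^ (α - 1) := (hf.comp hQ).pow_const _
  have hpull : ∫⁻ y, f y ^ α ∂(μ.map Q) = ∫⁻ x, (f (Q x) ^ (α - 1)) ^ (α / (α - 1)) ∂μ := by
    rw [lintegral_map (hf.pow_const α) hQ]
    refine lintegral_congr fun x ↦ ?_
    rw [← ENNReal.rpow_mul, mul_div_cancel₀ _ hα₁.ne']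
  have hdensity : ∫⁻ y, f y ^ α ∂(μ.map Q) = ∫⁻ x, f (Q x) ^ (α - 1) * g x ∂μ :=
    calc ∫⁻ y, f y ^ α ∂(μ.map Q) = ∫⁻ y, f y * f y ^ (α - 1) ∂(μ.map Q) := by
          refine lintegral_congr fun y ↦ ?_
          conv_lhs => rw [show α = 1 + (α - 1) by ring]
          rw [ENNReal.rpow_add_of_nonneg _ _ zero_le_one hα₁.le, ENNReal.rpow_one]
      _ = ∫⁻ y, f y ^ (α - 1) ∂((μ.withDensity g).map Q) :=
          lintegral_rnDeriv_mul ((withDensity_absolutelyContinuous μ g).map hQ)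
            (hf.pow_const _).aemeasurable
      _ = ∫⁻ x, f (Q x) ^ (α - 1) * g x ∂μ := by
          rw [lintegral_map (hf.pow_const _) hQ, lintegral_withDensity_eq_lintegral_mul _ hg hfQ]
          simp only [Pi.mul_apply, mul_comm]
  have hpq : (α / (α - 1)).HolderConjugate α := (Real.HolderConjugate.conjExponent hα).symm
  have hholder := ENNReal.lintegral_mul_le_Lp_mul_Lq μ hpq hfQ.aemeasurable hg.aemeasurable
  rw [one_div_div, ← hpull] at hholder
  refine ENNReal.le_of_le_rpow_mul_rpow (p := 1 / α) (q := (α - 1) / α) (by positivity)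
    (by positivity) (by field_simp; ring) hfin ?_
  exact hdensity.trans_le hholder

theorem Iic_inter_Ioo_ae_eq_Ioc {t : ℝ} (ht : t ≤ 1) :
    (Iic t ∩ Ioo 0 1 : Set ℝ) =ᵐ[volume] Ioc 0 t := by
  rw [← Iic_inter_Ioc_of_le ht]
  exact (ae_eq_refl _).inter Ioo_ae_eq_Ioc

theorem setLIntegral_Ioc_ofReal_mul_rpow {c r t : ℝ} (hc : 0 ≤ c) (hr : -1 < r) (ht : 0 ≤ t) :
    ∫⁻ u in Ioc 0 t, ENNReal.ofReal (c * u ^ r)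
      = ENNReal.ofReal (c * (t ^ (r + 1) / (r + 1))) := by
  rw [← ofReal_integral_eq_lintegral_ofReal, ← intervalIntegral.integral_of_le ht,
    intervalIntegral.integral_const_mul, integral_rpow (Or.inl hr),
    zero_rpow (by linarith), sub_zero]
  · exact ((intervalIntegral.intervalIntegrable_rpow' hr).const_mul c).1
  · filter_upwards [ae_restrict_mem measurableSet_Ioc] with u hu
    exact mul_nonneg hc (rpow_nonneg hu.1.le r)

end MeasureTheory

namespace ProbabilityTheory

/-- The quantile function of `μ`; only its values on `(0, 1)` matter. -/
noncomputable def quantile (μ : Measure ℝ) (u : ℝ) : ℝ :=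
  if u ∈ Ioo 0 1 then sInf {x | u ≤ cdf μ x} else 0

section Quantile

variable {μ : Measure ℝ}

theorem quantile_le_iff {u : ℝ} (hu : u ∈ Ioo 0 1) (x : ℝ) :
    quantile μ u ≤ x ↔ u ≤ cdf μ x := by
  set S := {y | u ≤ cdf μ y}
  have hS : S.Nonempty := ((tendsto_cdf_atTop μ).eventually (eventually_ge_nhds hu.2)).exists
  have hbdd : BddBelow S := by
    obtain ⟨y₀, hy₀⟩ := ((tendsto_cdf_atBot μ).eventually (eventually_lt_nhds hu.1)).exists
    exact ⟨y₀, fun y hy ↦ le_of_not_gt fun hy' ↦ (monotone_cdf μ hy'.le).trans_lt hy₀ |>.not_ge hy⟩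
  -- right-continuity of the cdf puts the infimum into `S`
  have hmem : sInf S ∈ S := by
    refine ge_of_tendsto (((cdf μ).right_continuous _).mono Ioi_subset_Ici_self)
      (eventually_nhdsWithin_of_forall fun y hy ↦ ?_)
    obtain ⟨z, hz, hzy⟩ := exists_lt_of_csInf_lt hS hy
    exact hz.trans (monotone_cdf μ hzy.le)
  rw [quantile, if_pos hu]
  exact ⟨fun h ↦ hmem.trans (monotone_cdf μ h), fun h ↦ csInf_le hbdd h⟩

theorem quantile_preimage_Iic_inter_Ioo (x : ℝ) :
    quantile μ ⁻¹' Iic x ∩ Ioo 0 1 = Iic (cdf μ x) ∩ Ioo 0 1 := by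
  ext u
  exact and_congr_left (quantile_le_iff · x)

theorem measurable_quantile : Measurable (quantile μ) := by
  refine measurable_of_Iic fun x ↦ ?_
  have hpre : quantile μ ⁻¹' Iic x = Iic (cdf μ x) ∩ Ioo 0 1 ∪ (Ioo 0 1)ᶜ ∩ {_u | 0 ≤ x} := by
    rw [← quantile_preimage_Iic_inter_Ioo]
    ext u
    by_cases hu : u ∈ Ioo (0 : ℝ) 1 <;> simp [hu, quantile]
  rw [hpre]
  exact (measurableSet_Iic.inter measurableSet_Ioo).union
    (measurableSet_Ioo.compl.inter (MeasurableSet.const _))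

theorem map_quantile_restrict_Ioo_apply_Iic (m : Measure ℝ) (x : ℝ) :
    (m.restrict (Ioo 0 1)).map (quantile μ) (Iic x) = m (Iic (cdf μ x) ∩ Ioo 0 1) := by
  rw [Measure.map_apply measurable_quantile measurableSet_Iic,
    Measure.restrict_apply (measurable_quantile measurableSet_Iic),
    quantile_preimage_Iic_inter_Ioo]

end Quantile

theorem map_quantile_volume_restrict_Ioo (μ : Measure ℝ) [IsProbabilityMeasure μ] :
    (volume.restrict (Ioo 0 1)).map (quantile μ) = μ :=
  Measure.ext_of_Iic _ _ fun x ↦ by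
    rw [map_quantile_restrict_Ioo_apply_Iic,
      measure_congr (Iic_inter_Ioo_ae_eq_Ioc (cdf_le_one μ x)), Real.volume_Ioc, sub_zero,
      ofReal_cdf]

theorem iIndepFun.map_sup'_apply_Iic {Ω ι : Type*} [MeasurableSpace Ω] {μ : Measure Ω}
    [Fintype ι] (hne : (Finset.univ : Finset ι).Nonempty) {X : ι → Ω → ℝ}
    (hX : ∀ i, Measurable (X i)) (hindep : iIndepFun X μ) {μ₀ : Measure ℝ}
    (hid : ∀ i, μ.map (X i) = μ₀) (x : ℝ) :
    μ.map (fun ω ↦ Finset.univ.sup' hne fun i ↦ X i ω) (Iic x)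
      = μ₀ (Iic x) ^ Fintype.card ι := by
  have hpre : (fun ω ↦ Finset.univ.sup' hne fun i ↦ X i ω) ⁻¹' Iic x = ⋂ i, X i ⁻¹' Iic x := by
    ext ω
    simp [Finset.sup'_le_iff]
  have hmax : Measurable fun ω ↦ Finset.univ.sup' hne fun i ↦ X i ω := by
    convert Finset.measurable_sup' hne fun i _ ↦ hX i
    rw [Finset.sup'_apply]
  rw [Measure.map_apply hmax measurableSet_Iic, hpre,
    hindep.meas_iInter fun i ↦ ⟨Iic x, measurableSet_Iic, rfl⟩]
  simp_rw [← Measure.map_apply (hX _) measurableSet_Iic, hid, Finset.prod_const, Finset.card_univ]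

noncomputable def maxUniformDensity (n : ℕ) (u : ℝ) : ℝ≥0∞ :=
  ENNReal.ofReal (n * u ^ ((n : ℝ) - 1))

theorem measurable_maxUniformDensity (n : ℕ) : Measurable (maxUniformDensity n) := by
  unfold maxUniformDensity
  fun_prop

theorem setLIntegral_Ioc_maxUniformDensity {n : ℕ} (hn : 0 < n) {t : ℝ} (ht : 0 ≤ t) :
    ∫⁻ u in Ioc 0 t, maxUniformDensity n u = ENNReal.ofReal (t ^ n) := by
  have hn' : (0 : ℝ) < n := Nat.cast_pos.2 hn
  unfold maxUniformDensity
  rw [setLIntegral_Ioc_ofReal_mul_rpow hn'.le (by linarith) ht, sub_add_cancel,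
    rpow_natCast, mul_div_cancel₀ _ hn'.ne']

theorem map_quantile_withDensity_maxUniformDensity_apply_Iic {n : ℕ} (hn : 0 < n)
    (μ : Measure ℝ) (x : ℝ) :
    ((volume.restrict (Ioo 0 1)).withDensity (maxUniformDensity n)).map (quantile μ) (Iic x)
      = ENNReal.ofReal (cdf μ x ^ n) := by
  rw [← restrict_withDensity measurableSet_Ioo, map_quantile_restrict_Ioo_apply_Iic,
    withDensity_apply _ (measurableSet_Iic.inter measurableSet_Ioo),
    setLIntegral_congr (Iic_inter_Ioo_ae_eq_Ioc (cdf_le_one μ x)),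
    setLIntegral_Ioc_maxUniformDensity hn (cdf_nonneg μ x)]

theorem withDensity_maxUniformDensity_le (n : ℕ) :
    (volume.restrict (Ioo (0 : ℝ) 1)).withDensity (maxUniformDensity n)
      ≤ (n : ℝ≥0∞) • volume.restrict (Ioo (0 : ℝ) 1) := by
  rw [← withDensity_const]
  refine withDensity_mono ?_
  filter_upwards [ae_restrict_mem measurableSet_Ioo] with u hu
  rcases Nat.eq_zero_or_pos n with rfl | hn
  · simp [maxUniformDensity]
  calc maxUniformDensity n u ≤ ENNReal.ofReal (n * 1) := by
        refine ENNReal.ofReal_le_ofReal (mul_le_mul_of_nonneg_left ?_ n.cast_nonneg)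
        exact rpow_le_one hu.1.le hu.2.le (sub_nonneg.2 (Nat.one_le_cast.2 hn))
    _ = n := by simp

theorem lintegral_maxUniformDensity_rpow {n : ℕ} (hn : 0 < n) {α : ℝ} (hα : 0 < α) :
    ∫⁻ u in Ioo 0 1, maxUniformDensity n u ^ α
      = ENNReal.ofReal ((n : ℝ) ^ α / (α * ((n : ℝ) - 1) + 1)) := by
  have hn' : (1 : ℝ) ≤ n := Nat.one_le_cast.2 hn
  have hr : 0 ≤ ((n : ℝ) - 1) * α := mul_nonneg (by linarith) hα.le
  calc ∫⁻ u in Ioo 0 1, maxUniformDensity n u ^ α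
        = ∫⁻ u in Ioc 0 1, ENNReal.ofReal ((n : ℝ) ^ α * u ^ (((n : ℝ) - 1) * α)) := by
          rw [Measure.restrict_congr_set Ioo_ae_eq_Ioc]
          refine setLIntegral_congr_fun measurableSet_Ioc fun u hu ↦ ?_
          have hu' : 0 ≤ u ^ ((n : ℝ) - 1) := rpow_nonneg hu.1.le _
          rw [maxUniformDensity, ENNReal.ofReal_rpow_of_nonneg (by positivity) hα.le,
            mul_rpow n.cast_nonneg hu', ← rpow_mul hu.1.le]
    _ = ENNReal.ofReal ((n : ℝ) ^ α / (α * ((n : ℝ) - 1) + 1)) := by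
          rw [setLIntegral_Ioc_ofReal_mul_rpow (by positivity) (by linarith) zero_le_one,
            one_rpow, mul_one_div, mul_comm α]

end ProbabilityTheory

/-- Let `X_1, …, X_n` be i.i.d. with law `μ₀`, and let `ν` be the
law of `R_n = max_i X_i`. Then for `α > 1`, the Rényi divergence
`D_α(ν‖μ₀) = (α-1)⁻¹ log ∫ (dν/dμ₀)^α dμ₀` satisfies
`D_α(ν‖μ₀) ≤ (α-1)⁻¹ log (n^α / (α(n-1)+1))` and consequently `D_α(ν‖μ₀) ≤ log n`. -/
theorem stmt13 {Ω : Type*} [MeasurableSpace Ω] (μ : Measure Ω) [IsProbabilityMeasure μ]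
    (n : ℕ) (hn : 0 < n) (X : Fin n → Ω → ℝ) (hmeas : ∀ i, Measurable (X i))
    (hindep : iIndepFun X μ)
    (μ₀ : Measure ℝ) (hid : ∀ i, Measure.map (X i) μ = μ₀)
    (α : ℝ) (hα : 1 < α) :
    (α - 1)⁻¹ * Real.log
        ((∫⁻ x, ((Measure.map (fun ω =>
            Finset.univ.sup' (Finset.univ_nonempty_iff.mpr (Fin.pos_iff_nonempty.mp hn))
              fun i => X i ω) μ).rnDeriv μ₀ x) ^ α ∂μ₀).toReal)
      ≤ (α - 1)⁻¹ * Real.log ((n:ℝ) ^ α / (α * ((n:ℝ) - 1) + 1)) ∧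
    (α - 1)⁻¹ * Real.log
        ((∫⁻ x, ((Measure.map (fun ω =>
            Finset.univ.sup' (Finset.univ_nonempty_iff.mpr (Fin.pos_iff_nonempty.mp hn))
              fun i => X i ω) μ).rnDeriv μ₀ x) ^ α ∂μ₀).toReal)
      ≤ Real.log n := by
  have : IsProbabilityMeasure μ₀ :=
    hid ⟨0, hn⟩ ▸ Measure.isProbabilityMeasure_map (hmeas _).aemeasurable
  have hne : (Finset.univ : Finset (Fin n)).Nonempty :=
    Finset.univ_nonempty_iff.mpr (Fin.pos_iff_nonempty.mp hn)
  set unif := volume.restrict (Ioo (0 : ℝ) 1)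
  set Q := quantile μ₀
  have hμ₀ : μ₀ = unif.map Q := (map_quantile_volume_restrict_Ioo μ₀).symm
  have hν : μ.map (fun ω ↦ Finset.univ.sup' hne fun i ↦ X i ω)
      = (unif.withDensity (maxUniformDensity n)).map Q :=
    Measure.ext_of_Iic _ _ fun x ↦ by
      rw [hindep.map_sup'_apply_Iic hne hmeas hid,
        map_quantile_withDensity_maxUniformDensity_apply_Iic hn, Fintype.card_fin, ← ofReal_cdf,
        ENNReal.ofReal_pow (cdf_nonneg μ₀ x)]
  have hbound : ∫⁻ x, (μ.map fun ω ↦ Finset.univ.sup' hne fun i ↦ X i ω).rnDeriv μ₀ x ^ α ∂μ₀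
      ≤ ENNReal.ofReal ((n : ℝ) ^ α / (α * ((n : ℝ) - 1) + 1)) := by
    rw [hν, hμ₀, ← lintegral_maxUniformDensity_rpow hn (zero_lt_one.trans hα)]
    refine lintegral_rnDeriv_map_rpow_le (measurable_maxUniformDensity n) measurable_quantile hα
      (lintegral_rnDeriv_rpow_ne_top_of_le_smul (ENNReal.natCast_ne_top n) ?_ (by linarith))
    rw [← Measure.map_smul]
    exact Measure.map_mono (withDensity_maxUniformDensity_le n) measurable_quantile
  have hn₁ : (1 : ℝ) ≤ n := Nat.one_le_cast.2 hn
  have hfirst := mul_le_mul_of_nonneg_left (ENNReal.log_toReal_le_of_le_ofReal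
    (one_le_rpow_div_mul_sub_one_add_one hn₁ hα.le) hbound) (inv_nonneg.2 (sub_pos.2 hα).le)
  exact ⟨hfirst, hfirst.trans (inv_sub_one_mul_log_rpow_div_le_log hn₁ hα)⟩
end

section
/- Let Z_1, Z_2 be i.i.d. with density θ z^{θ−1} e^{−z^θ} on (0,∞). Then E[√(Z_1² + Z_2²)] = Γ(2 + 1/θ) · ∫_0^1 (t^{2/θ} + (1−t)^{2/θ})^{1/2} dt. -/
/-!
Write `Zᵢ = Eᵢ ^ (1 / θ)` with `E₁, E₂` i.i.d. standard exponential. The expectation becomes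
`∫∫_{u,v>0} e^{-(u+v)} h(u, v)` with `h(u, v) = (u^{2/θ} + v^{2/θ})^{1/2}` homogeneous of degree
`1/θ`. In the coordinates `s = u + v`, `t = u / s` (Jacobian `s`) the integral factors as
`∫₀^∞ e^{-s} s^{1 + 1/θ} ds · ∫₀¹ h(t, 1 - t) dt = Γ(2 + 1/θ) ∫₀¹ h(t, 1 - t) dt`.
-/

open Real MeasureTheory ProbabilityTheory Set Function

open scoped ENNReal

lemma lintegral_Ioi_zero_eq_lintegral_Ioi_sub (a : ℝ) (g : ℝ → ℝ≥0∞) :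
    ∫⁻ v in Ioi 0, g v = ∫⁻ w in Ioi a, g (w - a) := by
  have himg : (fun w => w - a) '' Ioi a = Ioi 0 := by
    rw [image_sub_const_Ioi, sub_self]
  rw [← himg, lintegral_image_eq_lintegral_abs_deriv_mul (f := fun w => w - a) (f' := fun _ => 1)
    measurableSet_Ioi (fun w _ => ((hasDerivAt_id w).sub_const a).hasDerivWithinAt)
    sub_left_injective.injOn]
  simp

lemma lintegral_Ioo_zero_eq_mul_lintegral_Ioo_zero_one {s : ℝ} (hs : 0 < s) (g : ℝ → ℝ≥0∞) :
    ∫⁻ u in Ioo 0 s, g u = ENNReal.ofReal s * ∫⁻ t in Ioo 0 1, g (s * t) := by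
  have himg : (s * ·) '' Ioo 0 1 = Ioo 0 s := by
    rw [image_mul_left_Ioo hs, mul_zero, mul_one]
  rw [← himg, lintegral_image_eq_lintegral_abs_deriv_mul measurableSet_Ioo
    (fun t _ => by simpa using ((hasDerivAt_id t).const_mul s).hasDerivWithinAt)
    (mul_right_injective₀ hs.ne').injOn, abs_of_pos hs,
    lintegral_const_mul' _ _ ENNReal.ofReal_ne_top]

lemma lintegral_comp_rpow_Ioi {p : ℝ} (hp : p ≠ 0) (g : ℝ → ℝ≥0∞) :
    ∫⁻ x in Ioi 0, ENNReal.ofReal (|p| * x ^ (p - 1)) * g (x ^ p) = ∫⁻ y in Ioi 0, g y := by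
  have himg : (· ^ p) '' Ioi 0 = Ioi (0 : ℝ) := by
    refine Subset.antisymm (image_subset_iff.2 fun x hx => rpow_pos_of_pos hx p)
      fun y (hy : 0 < y) => ⟨y ^ p⁻¹, rpow_pos_of_pos hy _, rpow_inv_rpow hy.le hp⟩
  conv_rhs => rw [← himg]
  rw [lintegral_image_eq_lintegral_abs_deriv_mul measurableSet_Ioi
    (fun x hx ↦ (hasDerivAt_rpow_const (Or.inl (mem_Ioi.mp hx).ne')).hasDerivWithinAt)
    ((rpow_left_injOn hp).mono (by grind))]
  refine setLIntegral_congr_fun measurableSet_Ioi fun x hx ↦ ?_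
  rw [abs_mul, abs_of_nonneg (rpow_nonneg (le_of_lt hx) _)]

lemma lintegral_Ioi_lintegral_Ioi_swap {F : ℝ → ℝ → ℝ≥0∞} (hF : Measurable (uncurry F)) :
    ∫⁻ u in Ioi 0, ∫⁻ w in Ioi u, F u w = ∫⁻ w in Ioi 0, ∫⁻ u in Ioo 0 w, F u w := by
  set P : ℝ → ℝ → ℝ≥0∞ := fun u w => if 0 < u ∧ u < w then F u w else 0
  have hP : Measurable (uncurry P) :=
    Measurable.ite ((measurableSet_lt measurable_const measurable_fst).inter
      (measurableSet_lt measurable_fst measurable_snd)) hF measurable_const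
  calc ∫⁻ u in Ioi 0, ∫⁻ w in Ioi u, F u w = ∫⁻ u, ∫⁻ w, P u w := by
        rw [← lintegral_indicator measurableSet_Ioi]
        congr with u
        by_cases hu : 0 < u
        · rw [indicator_of_mem (mem_Ioi.2 hu), ← lintegral_indicator measurableSet_Ioi]
          congr with w
          by_cases hw : u < w <;> simp [P, hu, hw]
        · simp [P, hu]
    _ = ∫⁻ w, ∫⁻ u, P u w := lintegral_lintegral_swap hP.aemeasurable
    _ = ∫⁻ w in Ioi 0, ∫⁻ u in Ioo 0 w, F u w := by
        rw [← lintegral_indicator measurableSet_Ioi]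
        congr with w
        by_cases hw : 0 < w
        · rw [indicator_of_mem (mem_Ioi.2 hw), ← lintegral_indicator measurableSet_Ioo]
          congr with u
          by_cases hu : 0 < u ∧ u < w <;> simp [P, hu]
        · have : ∀ u, ¬ (0 < u ∧ u < w) := fun u ⟨h0, h1⟩ => hw (h0.trans h1)
          simp [P, hw, this]

-- The change of variables `(u, v) = (s t, s (1 - t))`, i.e. `s = u + v`, `t = u / (u + v)`.
lemma lintegral_Ioi_lintegral_Ioi_eq_simplex {g : ℝ → ℝ → ℝ≥0∞} (hg : Measurable (uncurry g)) :
    ∫⁻ u in Ioi 0, ∫⁻ v in Ioi 0, g u v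
      = ∫⁻ s in Ioi 0, ENNReal.ofReal s * ∫⁻ t in Ioo 0 1, g (s * t) (s * (1 - t)) :=
  calc ∫⁻ u in Ioi 0, ∫⁻ v in Ioi 0, g u v = ∫⁻ u in Ioi 0, ∫⁻ s in Ioi u, g u (s - u) :=
        lintegral_congr fun u => lintegral_Ioi_zero_eq_lintegral_Ioi_sub u (g u)
    _ = ∫⁻ s in Ioi 0, ∫⁻ u in Ioo 0 s, g u (s - u) :=
        lintegral_Ioi_lintegral_Ioi_swap
          (hg.comp (measurable_fst.prodMk (measurable_snd.sub measurable_fst)))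
    _ = ∫⁻ s in Ioi 0, ENNReal.ofReal s * ∫⁻ t in Ioo 0 1, g (s * t) (s * (1 - t)) := by
        refine setLIntegral_congr_fun measurableSet_Ioi fun s hs => ?_
        simp only [lintegral_Ioo_zero_eq_mul_lintegral_Ioo_zero_one hs, mul_one_sub]

lemma lintegral_exp_neg_mul_rpow_eq_Gamma {a : ℝ} (ha : 0 < a) :
    ∫⁻ s in Ioi 0, ENNReal.ofReal (exp (-s) * s ^ (a - 1)) = ENNReal.ofReal (Gamma a) := by
  rw [Gamma_eq_integral ha, ofReal_integral_eq_lintegral_ofReal (GammaIntegral_convergent ha)]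
  filter_upwards [ae_restrict_mem measurableSet_Ioi] with s hs
  have : 0 < s := hs
  positivity

lemma lintegral_Ioi_lintegral_Ioi_exp_neg_mul_homogeneous {α : ℝ} (hα : -2 < α)
    {h : ℝ → ℝ → ℝ≥0∞} (hh : Measurable (uncurry h))
    (hhom : ∀ s > 0, ∀ u > 0, ∀ v > 0, h (s * u) (s * v) = ENNReal.ofReal (s ^ α) * h u v) :
    ∫⁻ u in Ioi 0, ∫⁻ v in Ioi 0, ENNReal.ofReal (exp (-u)) * (ENNReal.ofReal (exp (-v)) * h u v)
      = ENNReal.ofReal (Gamma (α + 2)) * ∫⁻ t in Ioo 0 1, h t (1 - t) := by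
  rw [lintegral_Ioi_lintegral_Ioi_eq_simplex (by fun_prop)]
  set J := ∫⁻ t in Ioo 0 1, h t (1 - t)
  calc _ = ∫⁻ s in Ioi 0, ENNReal.ofReal (exp (-s) * s ^ (α + 2 - 1)) * J := by
        refine setLIntegral_congr_fun measurableSet_Ioi fun s (hs : 0 < s) => ?_
        have hslice : ∀ t ∈ Ioo (0 : ℝ) 1,
            ENNReal.ofReal (exp (-(s * t))) * (ENNReal.ofReal (exp (-(s * (1 - t))))
              * h (s * t) (s * (1 - t))) = ENNReal.ofReal (exp (-s) * s ^ α) * h t (1 - t) := by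
          rintro t ⟨ht₀, ht₁⟩
          rw [hhom s hs t ht₀ (1 - t) (sub_pos.2 ht₁), ← mul_assoc, ← mul_assoc,
            ← ENNReal.ofReal_mul (exp_nonneg _), ← exp_add,
            ← ENNReal.ofReal_mul (exp_nonneg _)]
          ring_nf
        rw [setLIntegral_congr_fun measurableSet_Ioo hslice,
          lintegral_const_mul' _ _ ENNReal.ofReal_ne_top, ← mul_assoc,
          ← ENNReal.ofReal_mul hs.le, show α + 2 - 1 = α + 1 by ring, rpow_add_one hs.ne']
        congr 2
        ring
    _ = ENNReal.ofReal (Gamma (α + 2)) * J := by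
        rw [lintegral_mul_const _ (by fun_prop),
          lintegral_exp_neg_mul_rpow_eq_Gamma (by linarith)]

lemma ProbabilityTheory.IndepFun.lintegral_comp_eq_lintegral_lintegral_map
    {Ω α β : Type*} [MeasurableSpace Ω] [MeasurableSpace α] [MeasurableSpace β]
    {μ : Measure Ω} [IsFiniteMeasure μ] {X : Ω → α} {Y : Ω → β} (hXY : IndepFun X Y μ)
    (hX : AEMeasurable X μ) (hY : AEMeasurable Y μ) {F : α × β → ℝ≥0∞} (hF : Measurable F) :
    ∫⁻ ω, F (X ω, Y ω) ∂μ = ∫⁻ x, ∫⁻ y, F (x, y) ∂μ.map Y ∂μ.map X := by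
  rw [← lintegral_prod _ hF.aemeasurable, ← (indepFun_iff_map_prod_eq_prod_map_map hX hY).1 hXY,
    lintegral_map' hF.aemeasurable (hX.prodMk hY)]

noncomputable def weibullDensity (θ z : ℝ) : ℝ≥0∞ :=
  ENNReal.ofReal (if 0 < z then θ * z ^ (θ - 1) * exp (-z ^ θ) else 0)

lemma measurable_weibullDensity (θ : ℝ) : Measurable (weibullDensity θ) :=
  (Measurable.ite (measurableSet_Ioi : MeasurableSet (Ioi (0 : ℝ))) (by fun_prop)
    measurable_const).ennreal_ofReal

-- A Weibull(θ) variable is `E ^ (1 / θ)` with `E` standard exponential.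
lemma lintegral_withDensity_weibullDensity {θ : ℝ} (hθ : 0 < θ) (g : ℝ → ℝ≥0∞) :
    ∫⁻ z, g z ∂volume.withDensity (weibullDensity θ)
      = ∫⁻ u in Ioi 0, ENNReal.ofReal (exp (-u)) * g (u ^ (1 / θ)) := by
  have hsupp : weibullDensity θ * g
      = (Ioi 0).indicator fun z => ENNReal.ofReal (θ * z ^ (θ - 1) * exp (-z ^ θ)) * g z := by
    ext z
    by_cases hz : 0 < z <;> simp [weibullDensity, hz]
  rw [lintegral_withDensity_eq_lintegral_mul_non_measurable _ (measurable_weibullDensity θ)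
    (ae_of_all _ fun _ => ENNReal.ofReal_lt_top), hsupp, lintegral_indicator measurableSet_Ioi]
  conv_rhs => rw [← lintegral_comp_rpow_Ioi hθ.ne']
  refine setLIntegral_congr_fun measurableSet_Ioi fun z (hz : 0 < z) => ?_
  rw [abs_of_pos hθ, one_div, rpow_rpow_inv hz.le hθ.ne', ← mul_assoc,
    ← ENNReal.ofReal_mul (by positivity)]

lemma sqrt_mul_rpow_sq_add_mul_rpow_sq {p s u v : ℝ} (hs : 0 ≤ s) (hu : 0 ≤ u) (hv : 0 ≤ v) :
    √(((s * u) ^ p) ^ 2 + ((s * v) ^ p) ^ 2) = s ^ p * √((u ^ p) ^ 2 + (v ^ p) ^ 2) := by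
  rw [mul_rpow hs hu, mul_rpow hs hv, mul_pow, mul_pow, ← mul_add,
    sqrt_mul (sq_nonneg _), sqrt_sq (rpow_nonneg hs p)]

lemma sqrt_rpow_sq_add_rpow_sq {θ u v : ℝ} (hu : 0 ≤ u) (hv : 0 ≤ v) :
    √((u ^ (1 / θ)) ^ 2 + (v ^ (1 / θ)) ^ 2) = (u ^ (2 / θ) + v ^ (2 / θ)) ^ (1 / 2 : ℝ) := by
  have hsq : ∀ w : ℝ, 0 ≤ w → (w ^ (1 / θ)) ^ 2 = w ^ (2 / θ) := fun w hw => by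
    rw [← rpow_natCast, ← rpow_mul hw]
    ring_nf
  rw [hsq u hu, hsq v hv, sqrt_eq_rpow]

lemma lintegral_lintegral_sqrt_sq_add_sq_weibull {θ : ℝ} (hθ : 0 < θ) :
    ∫⁻ x, ∫⁻ y, ENNReal.ofReal √(x ^ 2 + y ^ 2) ∂volume.withDensity (weibullDensity θ)
        ∂volume.withDensity (weibullDensity θ)
      = ENNReal.ofReal (Gamma (2 + 1 / θ)) *
          ∫⁻ t in Ioo 0 1, ENNReal.ofReal ((t ^ (2 / θ) + (1 - t) ^ (2 / θ)) ^ (1 / 2 : ℝ)) := by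
  conv_lhs => simp only [lintegral_withDensity_weibullDensity hθ,
    ← lintegral_const_mul' _ _ ENNReal.ofReal_ne_top]
  have hdeg : -2 < 1 / θ := by
    have : 0 < 1 / θ := by positivity
    linarith
  rw [lintegral_Ioi_lintegral_Ioi_exp_neg_mul_homogeneous hdeg (by fun_prop), add_comm]
  · congr 1
    refine setLIntegral_congr_fun measurableSet_Ioo fun t ⟨ht₀, ht₁⟩ => ?_
    rw [sqrt_rpow_sq_add_rpow_sq ht₀.le (sub_nonneg.2 ht₁.le)]
  · intro s hs u hu v hv
    rw [sqrt_mul_rpow_sq_add_mul_rpow_sq hs.le hu.le hv.le, ENNReal.ofReal_mul (by positivity)]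

lemma setIntegral_Icc_eq_toReal_setLIntegral_Ioo {f : ℝ → ℝ} {a b : ℝ} (hf : Measurable f)
    (hnonneg : ∀ t ∈ Ioo a b, 0 ≤ f t) :
    ∫ t in Icc a b, f t = (∫⁻ t in Ioo a b, ENNReal.ofReal (f t)).toReal := by
  rw [← setIntegral_congr_set Ioo_ae_eq_Icc, integral_eq_lintegral_of_nonneg_ae
    (ae_restrict_of_forall_mem measurableSet_Ioo hnonneg) hf.aestronglyMeasurable]

/-- For i.i.d. `Z₁, Z₂` with density `θ z^{θ-1} e^{-z^θ}` on
`(0,∞)`, the expected Euclidean norm is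
`E[√(Z₁² + Z₂²)] = Γ(2 + 1/θ) ∫₀¹ (t^{2/θ} + (1-t)^{2/θ})^{1/2} dt`. -/
theorem stmt18 {Ω : Type*} [MeasurableSpace Ω] (μ : Measure Ω) [IsProbabilityMeasure μ]
    (θ : ℝ) (hθ : 0 < θ) (Z : Fin 2 → Ω → ℝ) (hmeas : ∀ i, Measurable (Z i))
    (hiid : iIndepFun Z μ)
    (hdens : ∀ i, Measure.map (Z i) μ
      = volume.withDensity (fun z => ENNReal.ofReal
          (if 0 < z then θ * z ^ (θ - 1) * Real.exp (-z ^ θ) else 0))) :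
    ∫ ω, Real.sqrt ((Z 0 ω) ^ 2 + (Z 1 ω) ^ 2) ∂μ
      = Real.Gamma (2 + 1/θ) *
        ∫ t in Set.Icc (0:ℝ) 1, (t ^ (2/θ) + (1 - t) ^ (2/θ)) ^ ((1:ℝ)/2) := by
  have hlaw : ∀ i, μ.map (Z i) = volume.withDensity (weibullDensity θ) := hdens
  have hnorm : ∫⁻ ω, ENNReal.ofReal √(Z 0 ω ^ 2 + Z 1 ω ^ 2) ∂μ
      = ENNReal.ofReal (Gamma (2 + 1 / θ)) *
          ∫⁻ t in Ioo 0 1, ENNReal.ofReal ((t ^ (2 / θ) + (1 - t) ^ (2 / θ)) ^ (1 / 2 : ℝ)) := by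
    rw [(hiid.indepFun zero_ne_one).lintegral_comp_eq_lintegral_lintegral_map
      (hmeas 0).aemeasurable (hmeas 1).aemeasurable
      (F := fun p => ENNReal.ofReal √(p.1 ^ 2 + p.2 ^ 2)) (by fun_prop), hlaw, hlaw,
      lintegral_lintegral_sqrt_sq_add_sq_weibull hθ]
  have hprofile_nonneg : ∀ t ∈ Ioo (0 : ℝ) 1, 0 ≤ (t ^ (2 / θ) + (1 - t) ^ (2 / θ)) ^ (1 / 2 : ℝ) :=
    fun t ⟨ht₀, ht₁⟩ => rpow_nonneg
      (add_nonneg (rpow_nonneg ht₀.le _) (rpow_nonneg (sub_nonneg.2 ht₁.le) _)) _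
  rw [integral_eq_lintegral_of_nonneg_ae (f := fun ω => √(Z 0 ω ^ 2 + Z 1 ω ^ 2))
    (ae_of_all _ fun _ => sqrt_nonneg _)
    (((hmeas 0).pow_const 2).add ((hmeas 1).pow_const 2)).sqrt.aestronglyMeasurable, hnorm,
    setIntegral_Icc_eq_toReal_setLIntegral_Ioo (by fun_prop) hprofile_nonneg,
    ENNReal.toReal_mul, ENNReal.toReal_ofReal (Gamma_pos_of_pos (by positivity)).le]
end
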